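/- arXiv:1112.2638 — 3 statements merged into one kernel-verified Lean document; each statement's English description precedes it below -/
import Mathlib

section
/- Weak duality for the constrained generic multiple stopping problem: for any martingales (M_r^{L−k+1})_{r≥0}, k = 1,…,L, and any integrable adapted processes (A_r^{L−k+1})_{r≥0}, k = 1,…,L, it holds for every i ≥ 0 (with j_0 := i) that, almost surely, Y*_i^{L} ≤ E[ max over chains i ≤ j_1 ≤ … ≤ j_L ≤ ∂ with C_L(j_1,…,j_L) = 1 of ( Σ_{k=1}^{L} U_{j_k}^{k} ∏_{l=1}^{k−1} V_{j_l}^{l} + Σ_{k=1}^{L} ∏_{l=1}^{k−1} V_{j_l}^{l} ( M_{j_{k−1}}^{L−k+1} − M_{j_k}^{L−k+1} + E[ A_{ρ^{j_{k−1}}}^{L−k+1} | F_{j_k} ] − E[ A_{ρ^{j_{k−1}}}^{L−k+1} | F_{j_{k−1}} ] ) ) | F_i ]. -/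
open MeasureTheory

noncomputable section

variable {Ω : Type*} [m0 : MeasurableSpace Ω]

/-- `Y` is an essential supremum of the family `S` of random variables w.r.t. `μ`. -/
def IsEssSupFamily (μ : Measure Ω) (S : Set (Ω → ℝ)) (Y : Ω → ℝ) : Prop :=
  (∀ f ∈ S, f ≤ᵐ[μ] Y) ∧ ∀ Z : Ω → ℝ, (∀ f ∈ S, f ≤ᵐ[μ] Z) → Y ≤ᵐ[μ] Z

/-- `ECount a l j` is the number of indices `r ∈ [a, l]` with `j r = j l`, i.e. the number
of rights exercised at time `j l` in the non-decreasing chain `j a ≤ ... ≤ j l`. -/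
def ECount (a l : ℕ) (j : ℕ → ℕ) : ℕ :=
  ((Finset.Icc a l).filter fun r => j r = j l).card

/-- The volume constraint (given by `v`) and the refraction period constraint (given by the
stopping times `ρ`) hold at `ω` for the non-decreasing chain `j a ≤ ... ≤ j b` of exercise
dates; this is the event `C(j a, ..., j b) = 1`. -/
def SatCons (v ρ : ℕ → Ω → ℕ) (a b : ℕ) (j : ℕ → ℕ) (ω : Ω) : Prop :=
  (∀ l, a ≤ l → l ≤ b → ECount a l j ≤ v (j l) ω) ∧
  ∀ l, a < l → l ≤ b → j (l - 1) < j l → ρ (j (l - 1)) ω ≤ j l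

/-- The family of conditional payoffs whose essential supremum is the auxiliary Snell
envelope `Y*_r^{L-k+1}` of the constrained generic multiple stopping problem. -/
def auxFamily (T L : ℕ) (μ : Measure Ω) (ℱ : Filtration ℕ m0)
    (U V : ℕ → ℕ → Ω → ℝ) (v ρ : ℕ → Ω → ℕ) (k r : ℕ) : Set (Ω → ℝ) :=
  { g | ∃ τ : ℕ → Ω → ℕ,
      (∀ p, IsStoppingTime ℱ (fun ω => (τ p ω : WithTop ℕ))) ∧
      (∀ ω, r ≤ τ k ω) ∧
      (∀ p, k ≤ p → p < L → ∀ ω, τ p ω ≤ τ (p + 1) ω) ∧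
      (∀ ω, τ L ω ≤ T + 1) ∧
      (∀ ω, SatCons v ρ k L (fun p => τ p ω) ω) ∧
      g = μ[(fun ω => ∑ p ∈ Finset.Icc k L,
          U p (τ p ω) ω * ∏ l ∈ Finset.Ico k p, V l (τ l ω) ω)|ℱ r] }

/-- `M` is a martingale w.r.t. the filtration `ℱ` from time `p` on. -/
def IsMartingaleFrom (μ : Measure Ω) (ℱ : Filtration ℕ m0) (p : ℕ) (M : ℕ → Ω → ℝ) : Prop :=
  (∀ r, p ≤ r → StronglyMeasurable[ℱ r] (M r)) ∧
  (∀ r, p ≤ r → Integrable (M r) μ) ∧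
  ∀ r, p ≤ r → μ[M (r + 1)|ℱ r] =ᵐ[μ] M r

/-- `(M, A)` is the Doob decomposition of the adapted integrable process `Y`:
`M` is a martingale, `A` is predictable, `M 0 = A 0 = 0` and `Y r = Y 0 + M r - A r`. -/
def IsDoobDecomp (μ : Measure Ω) (ℱ : Filtration ℕ m0) (Y M A : ℕ → Ω → ℝ) : Prop :=
  IsMartingaleFrom μ ℱ 0 M ∧
  (∀ r, 0 < r → StronglyMeasurable[ℱ (r - 1)] (A r)) ∧
  (∀ r, Integrable (A r) μ) ∧
  M 0 = 0 ∧ A 0 = 0 ∧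
  ∀ r, Y r =ᵐ[μ] fun ω => Y 0 ω + M r ω - A r ω

/-- The chain `i = j 0 ≤ j 1 ≤ ... ≤ j m ≤ d`, normalized by `j p = 0` for `p > m`. -/
def PrefChain (i m d : ℕ) (j : ℕ → ℕ) : Prop :=
  j 0 = i ∧ (∀ p, p < m → j p ≤ j (p + 1)) ∧ j m ≤ d ∧ ∀ p, m < p → j p = 0


set_option linter.unusedSectionVars false


private lemma wd_sm_ite {m : MeasurableSpace Ω} {p : Ω → Prop} [DecidablePred p]
    (hp : MeasurableSet[m] {ω | p ω}) :
    StronglyMeasurable[m] (fun ω => if p ω then (1:ℝ) else 0) := by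
  have h : (fun ω => if p ω then (1:ℝ) else 0) = ({ω | p ω}).indicator (fun _ => (1:ℝ)) := by
    funext ω; by_cases h : p ω <;> simp [h]
  rw [h]
  exact stronglyMeasurable_const.indicator hp

private lemma wd_telescope (f : ℕ → ℝ) (s m d : ℕ) (hsm : s ≤ m) (hmd : m ≤ d) :
    ∑ r ∈ Finset.Ico s d, (if r < m then f (r+1) - f r else 0) = f m - f s := by
  rw [← Finset.sum_Ico_consecutive _ hsm hmd]
  have h1 : ∑ r ∈ Finset.Ico s m, (if r < m then f (r+1) - f r else 0)
      = ∑ r ∈ Finset.Ico s m, (f (r+1) - f r) := by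
    refine Finset.sum_congr rfl fun r hr => ?_
    simp only [Finset.mem_Ico] at hr
    rw [if_pos hr.2]
  have h2 : ∑ r ∈ Finset.Ico m d, (if r < m then f (r+1) - f r else 0) = 0 := by
    refine Finset.sum_eq_zero fun r hr => ?_
    simp only [Finset.mem_Ico] at hr
    rw [if_neg (by omega)]
  rw [h1, h2, add_zero, Finset.sum_Ico_eq_sum_range]
  have h3 : ∀ j, f (s + j + 1) - f (s + j) = (fun j => f (s + j)) (j+1) - (fun j => f (s+j)) j := by
    intro j; simp [Nat.add_assoc]
  calc ∑ j ∈ Finset.range (m - s), (f (s + j + 1) - f (s + j))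
      = ∑ j ∈ Finset.range (m - s), ((fun j => f (s + j)) (j+1) - (fun j => f (s+j)) j) :=
        Finset.sum_congr rfl fun j _ => h3 j
    _ = f (s + (m - s)) - f (s + 0) := by exact Finset.sum_range_sub (fun j => f (s + j)) (m - s)
    _ = f m - f s := by rw [Nat.add_sub_cancel' hsm, Nat.add_zero]

private lemma wd_ECount_congr {a l : ℕ} {j j' : ℕ → ℕ} (h : ∀ r, a ≤ r → r ≤ l → j r = j' r) :
    ((Finset.Icc a l).filter fun r => j r = j l).card
      = ((Finset.Icc a l).filter fun r => j' r = j' l).card := by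
  rcases le_or_gt a l with hal | hal
  · congr 1
    refine Finset.filter_congr fun r hr => ?_
    simp only [Finset.mem_Icc] at hr
    rw [h r hr.1 hr.2, h l hal le_rfl]
  · rw [Finset.Icc_eq_empty (by omega)]
    simp

private lemma wd_condexp_mul_incr (μ : Measure Ω) [IsProbabilityMeasure μ]
    (ℱ : Filtration ℕ m0) (N : ℕ → Ω → ℝ)
    (hNm : ∀ r, StronglyMeasurable[ℱ r] (N r)) (hNi : ∀ r, Integrable (N r) μ)
    (hNmart : ∀ r, μ[N (r+1)|ℱ r] =ᵐ[μ] N r)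
    (G : Ω → ℝ) (i r : ℕ) (hir : i ≤ r)
    (hG : StronglyMeasurable[ℱ r] G) (c : ℝ) (hGb : ∀ ω, |G ω| ≤ c) :
    μ[fun ω => G ω * (N (r+1) ω - N r ω)|ℱ i] =ᵐ[μ] 0 := by
  have hdiff : Integrable (fun ω => N (r+1) ω - N r ω) μ := (hNi _).sub (hNi _)
  have hprod : Integrable (fun ω => G ω * (N (r+1) ω - N r ω)) μ :=
    hdiff.bdd_mul ((hG.mono (ℱ.le r)).aestronglyMeasurable)
      (Filter.Eventually.of_forall fun ω => by simpa using hGb ω)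
  have h0 : μ[fun ω => G ω * (N (r+1) ω - N r ω)|ℱ r] =ᵐ[μ] 0 := by
    have hmul : μ[fun ω => G ω * (N (r+1) ω - N r ω)|ℱ r]
        =ᵐ[μ] G * μ[fun ω => N (r+1) ω - N r ω|ℱ r] :=
      condExp_mul_of_stronglyMeasurable_left hG hprod hdiff
    have hsub : μ[fun ω => N (r+1) ω - N r ω|ℱ r] =ᵐ[μ] μ[N (r+1)|ℱ r] - μ[N r|ℱ r] :=
      condExp_sub (hNi _) (hNi _) _
    have hNr : μ[N r|ℱ r] =ᵐ[μ] N r :=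
      Filter.EventuallyEq.of_eq (condExp_of_stronglyMeasurable (ℱ.le r) (hNm r) (hNi r))
    filter_upwards [hmul, hsub, hNmart r, hNr] with ω h1 h2 h3 h4
    simp only [Pi.mul_apply, Pi.sub_apply, Pi.zero_apply] at *
    rw [h1, h2, h3, h4]
    ring
  calc μ[fun ω => G ω * (N (r+1) ω - N r ω)|ℱ i]
      =ᵐ[μ] μ[μ[fun ω => G ω * (N (r+1) ω - N r ω)|ℱ r]|ℱ i] :=
        (condExp_condExp_of_le (ℱ.mono hir) (ℱ.le r)).symm
    _ =ᵐ[μ] μ[(0 : Ω → ℝ)|ℱ i] := condExp_congr_ae h0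
    _ =ᵐ[μ] 0 := Filter.EventuallyEq.of_eq condExp_zero

private lemma wd_sm_sup' {ι : Type*} {m : MeasurableSpace Ω} (s : Finset ι) (hs : s.Nonempty)
    (f : ι → Ω → ℝ) (hf : ∀ b ∈ s, StronglyMeasurable[m] (f b)) :
    StronglyMeasurable[m] (fun ω => s.sup' hs (fun b => f b ω)) := by
  induction hs using Finset.Nonempty.cons_induction with
  | singleton a => simpa using hf a (Finset.mem_singleton_self a)
  | cons a s ha hs ih =>
    have h : (fun ω => (Finset.cons a s ha).sup' (Finset.cons_nonempty ha) (fun b => f b ω))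
        = fun ω => f a ω ⊔ s.sup' hs (fun b => f b ω) := by
      funext ω; rw [Finset.sup'_cons]
    rw [h]
    exact (hf a (Finset.mem_cons_self a s)).sup
      (ih fun b hb => hf b (Finset.mem_cons_of_mem hb))

set_option maxHeartbeats 2000000 in
/-- **Weak duality for the constrained generic multiple stopping problem.** For any
martingales `(M k r)_{r ≥ 0}` and any integrable adapted processes `(A k r)_{r ≥ 0}`,
`k = 1, ..., L`, it holds almost surely (with `j 0 := i`) that
`Y*_i^L ≤ E[ max over constrained chains i ≤ j 1 ≤ ... ≤ j L ≤ T+1 of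
  ( ∑_{k=1}^{L} U k (j k) ∏_{l=1}^{k-1} V l (j l)
    + ∑_{k=1}^{L} ∏_{l=1}^{k-1} V l (j l) ( M k (j (k-1)) - M k (j k)
        + E[A k (ρ (j (k-1))) | ℱ (j k)] - E[A k (ρ (j (k-1))) | ℱ (j (k-1))] ) ) | ℱ i ]`. -/
theorem weak_duality_constrained_generic
    (T L i : ℕ) (μ : Measure Ω) [IsProbabilityMeasure μ] (ℱ : Filtration ℕ m0)
    (U V : ℕ → ℕ → Ω → ℝ) (v ρ : ℕ → Ω → ℕ)
    (hL : 1 ≤ L) (hi : i ≤ T + 1)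
    (hU : ∀ p i, 1 ≤ p → p ≤ L → i ≤ T + 1 →
      StronglyMeasurable[ℱ i] (U p i) ∧ Integrable (U p i) μ)
    (hV : ∀ l i, 1 ≤ l → l ≤ L - 1 → i ≤ T + 1 →
      StronglyMeasurable[ℱ i] (V l i) ∧ (∀ ω, 0 < V l i ω) ∧ ∃ c : ℝ, ∀ ω, V l i ω ≤ c)
    (hvad : ∀ i, i ≤ T + 1 → Measurable[ℱ i] (v i))
    (hvb : ∀ i ω, i ≤ T + 1 → 1 ≤ v i ω ∧ v i ω ≤ L)
    (hvT : ∀ ω, v (T + 1) ω = L)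
    (hρ : ∀ i, i ≤ T → IsStoppingTime ℱ (fun ω => (ρ i ω : WithTop ℕ)) ∧ ∀ ω, i + 1 ≤ ρ i ω ∧ ρ i ω ≤ T + 1)
    -- `Ystar 1 i` is the value `Y*_i^L` of the constrained multiple stopping problem
    (Ystar : ℕ → ℕ → Ω → ℝ)
    (hY : ∀ k r, 1 ≤ k → k ≤ L → r ≤ T + 1 →
      IsEssSupFamily μ (auxFamily T L μ ℱ U V v ρ k r) (Ystar k r))
    -- an arbitrary family of martingales and integrable adapted processes
    (M A : ℕ → ℕ → Ω → ℝ)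
    (hM : ∀ k, 1 ≤ k → k ≤ L → IsMartingaleFrom μ ℱ 0 (M k))
    (hA : ∀ k r, 1 ≤ k → k ≤ L → r ≤ T + 1 →
      StronglyMeasurable[ℱ r] (A k r) ∧ Integrable (A k r) μ) :
    Ystar 1 i ≤ᵐ[μ]
      μ[(fun ω => sSup { x : ℝ | ∃ j : ℕ → ℕ,
          PrefChain i L (T + 1) j ∧ SatCons v ρ 1 L j ω ∧
          x = (∑ k ∈ Finset.Icc 1 L,
                U k (j k) ω * ∏ l ∈ Finset.Ico 1 k, V l (j l) ω)
            + ∑ k ∈ Finset.Icc 1 L, (∏ l ∈ Finset.Ico 1 k, V l (j l) ω) *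
                (M k (j (k - 1)) ω - M k (j k) ω
                  + (μ[(fun ω' => A k (ρ (j (k - 1)) ω') ω')|ℱ (j k)]) ω
                  - (μ[(fun ω' => A k (ρ (j (k - 1)) ω') ω')|ℱ (j (k - 1))]) ω) })|ℱ i] := by
  classical
  obtain ⟨ce, hce⟩ : ∃ f : ℕ → ℕ → ℕ → Ω → ℝ,
      f = fun k s t => μ[(fun ω' => A k (ρ s ω') ω')|ℱ t] := ⟨_, rfl⟩
  obtain ⟨Z, hZdef⟩ : ∃ Zf : Ω → ℝ, Zf = fun ω => sSup { x : ℝ | ∃ j : ℕ → ℕ,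
          PrefChain i L (T + 1) j ∧ SatCons v ρ 1 L j ω ∧
          x = (∑ k ∈ Finset.Icc 1 L,
                U k (j k) ω * ∏ l ∈ Finset.Ico 1 k, V l (j l) ω)
            + ∑ k ∈ Finset.Icc 1 L, (∏ l ∈ Finset.Ico 1 k, V l (j l) ω) *
                (M k (j (k - 1)) ω - M k (j k) ω
                  + (μ[(fun ω' => A k (ρ (j (k - 1)) ω') ω')|ℱ (j k)]) ω
                  - (μ[(fun ω' => A k (ρ (j (k - 1)) ω') ω')|ℱ (j (k - 1))]) ω) } := ⟨_, rfl⟩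
  rw [← hZdef]
  obtain ⟨-, hlub⟩ := hY 1 i le_rfl hL hi
  refine hlub _ ?_
  rintro g ⟨τ, hst, hτi, hmonoτ, hτT, hcons, rfl⟩
  -- ### basic facts about the stopping chain τ
  have hmono' : ∀ q p, 1 ≤ p → p ≤ q → q ≤ L → ∀ ω, τ p ω ≤ τ q ω := by
    intro q
    induction q with
    | zero => intro p h1 h2 _ _; exact absurd (h1.trans h2) (by omega)
    | succ n ih =>
      intro p h1 h2 hqL ω
      rcases Nat.lt_or_ge p (n + 1) with hp | hp
      · exact le_trans (ih p h1 (by omega) (by omega) ω) (hmonoτ n (by omega) (by omega) ω)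
      · have hpn : p = n + 1 := by omega
        subst hpn; exact le_rfl
  have hτub : ∀ p, 1 ≤ p → p ≤ L → ∀ ω, τ p ω ≤ T + 1 :=
    fun p h1 h2 ω => le_trans (hmono' L p h1 h2 le_rfl ω) (hτT ω)
  have hτlb : ∀ p, 1 ≤ p → p ≤ L → ∀ ω, i ≤ τ p ω :=
    fun p h1 h2 ω => le_trans (hτi ω) (hmono' p 1 le_rfl h1 h2 ω)
  -- ### the random exercise chain J (with J 0 = i)
  obtain ⟨J, hJdef⟩ : ∃ Jf : ℕ → Ω → ℕ,
      Jf = fun p ω => if p = 0 then i else if p ≤ L then τ p ω else 0 := ⟨_, rfl⟩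
  have hJ0 : ∀ ω, J 0 ω = i := fun ω => by simp [hJdef]
  have hJp : ∀ p, 1 ≤ p → p ≤ L → ∀ ω, J p ω = τ p ω := by
    intro p h1 h2 ω; rw [hJdef]; simp only; rw [if_neg (by omega), if_pos h2]
  have hJub : ∀ p, p ≤ L → ∀ ω, J p ω ≤ T + 1 := by
    intro p hp ω
    rcases Nat.eq_zero_or_pos p with h0 | h0
    · subst h0; rw [hJ0]; exact hi
    · rw [hJp p h0 hp]; exact hτub p h0 hp ω
  have hJlb : ∀ p, p ≤ L → ∀ ω, i ≤ J p ω := by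
    intro p hp ω
    rcases Nat.eq_zero_or_pos p with h0 | h0
    · subst h0; rw [hJ0]
    · rw [hJp p h0 hp]; exact hτlb p h0 hp ω
  have hJmono : ∀ p q, p ≤ q → q ≤ L → ∀ ω, J p ω ≤ J q ω := by
    intro p q hpq hq ω
    rcases Nat.eq_zero_or_pos p with h0 | h0
    · subst h0; rw [hJ0]; exact hJlb q hq ω
    · rw [hJp p (by omega) (by omega), hJp q (by omega) hq]
      exact hmono' q p (by omega) hpq hq ω
  -- ### the payoff P and the martingale correction C
  obtain ⟨P, hPdef⟩ : ∃ Pf : Ω → ℝ, Pf = fun ω => ∑ p ∈ Finset.Icc 1 L,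
      U p (τ p ω) ω * ∏ l ∈ Finset.Ico 1 p, V l (τ l ω) ω := ⟨_, rfl⟩
  obtain ⟨C, hCdef⟩ : ∃ Cf : Ω → ℝ, Cf = fun ω => ∑ k ∈ Finset.Icc 1 L,
      (∏ l ∈ Finset.Ico 1 k, V l (J l ω) ω) *
        (M k (J (k - 1) ω) ω - M k (J k ω) ω
          + ce k (J (k - 1) ω) (J k ω) ω - ce k (J (k - 1) ω) (J (k - 1) ω) ω) := ⟨_, rfl⟩
  rw [← hPdef]
  -- ### bounds for V
  have hVc : ∀ l t, ∃ c, 1 ≤ l → l ≤ L - 1 → t ≤ T + 1 → ∀ ω, V l t ω ≤ c := by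
    intro l t
    by_cases h : 1 ≤ l ∧ l ≤ L - 1 ∧ t ≤ T + 1
    · obtain ⟨c, hc⟩ := (hV l t h.1 h.2.1 h.2.2).2.2
      exact ⟨c, fun _ _ _ => hc⟩
    · exact ⟨0, fun h1 h2 h3 => absurd ⟨h1, h2, h3⟩ h⟩
  choose cV hcV using hVc
  obtain ⟨cV', hcV'⟩ : ∃ f : ℕ → ℕ → ℝ, f = fun l t => max (cV l t) 0 := ⟨_, rfl⟩
  have hcV'nn : ∀ l t, 0 ≤ cV' l t := fun l t => by rw [hcV']; exact le_max_right _ _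
  have hcV'le : ∀ l t ω, 1 ≤ l → l ≤ L - 1 → t ≤ T + 1 → V l t ω ≤ cV' l t := by
    intro l t ω h1 h2 h3; rw [hcV']; exact le_max_of_le_left (hcV l t h1 h2 h3 ω)
  -- ### conditional expectation process and the auxiliary martingales N
  obtain ⟨N, hNdef⟩ : ∃ f : ℕ → ℕ → ℕ → Ω → ℝ,
      f = fun k s t ω => ce k s t ω - M k t ω := ⟨_, rfl⟩
  have hceSM : ∀ k s t, StronglyMeasurable[ℱ t] (ce k s t) := by
    intro k s t; rw [hce]; exact stronglyMeasurable_condExp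
  have hceInt : ∀ k s t, Integrable (ce k s t) μ := by
    intro k s t; rw [hce]; exact integrable_condExp
  have hNSM : ∀ k s t, 1 ≤ k → k ≤ L → StronglyMeasurable[ℱ t] (N k s t) := by
    intro k s t hk1 hk2; rw [hNdef]
    exact (hceSM k s t).sub ((hM k hk1 hk2).1 t (Nat.zero_le t))
  have hNInt : ∀ k s t, 1 ≤ k → k ≤ L → Integrable (N k s t) μ := by
    intro k s t hk1 hk2; rw [hNdef]
    exact (hceInt k s t).sub ((hM k hk1 hk2).2.1 t (Nat.zero_le t))
  have hNmart : ∀ k s t, 1 ≤ k → k ≤ L → μ[N k s (t + 1)|ℱ t] =ᵐ[μ] N k s t := by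
    intro k s t hk1 hk2
    simp only [hNdef]
    have h4 : (fun ω => ce k s (t + 1) ω - M k (t + 1) ω) = ce k s (t + 1) - M k (t + 1) := rfl
    rw [h4]
    have h1 : μ[ce k s (t + 1) - M k (t + 1)|ℱ t]
        =ᵐ[μ] μ[ce k s (t + 1)|ℱ t] - μ[M k (t + 1)|ℱ t] :=
      condExp_sub (hceInt k s (t + 1)) ((hM k hk1 hk2).2.1 (t + 1) (Nat.zero_le _)) _
    have h2 : μ[ce k s (t + 1)|ℱ t] =ᵐ[μ] ce k s t := by
      rw [hce]
      exact condExp_condExp_of_le (ℱ.mono (Nat.le_succ t)) (ℱ.le (t + 1))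
    have h3 : μ[M k (t + 1)|ℱ t] =ᵐ[μ] M k t := (hM k hk1 hk2).2.2 t (Nat.zero_le t)
    filter_upwards [h1, h2, h3] with ω e1 e2 e3
    simp only [Pi.sub_apply] at e1
    rw [e1, e2, e3]
  -- ### the indicator-product processes
  obtain ⟨Hp, hHpdef⟩ : ∃ f : ℕ → ℕ → Ω → ℝ, f = fun k s ω =>
      ∏ l ∈ Finset.Ico 1 k, ∑ u ∈ Finset.range (s + 1),
        (if τ l ω = u then (1 : ℝ) else 0) * V l u ω := ⟨_, rfl⟩
  obtain ⟨cHp, hcHpdef⟩ : ∃ f : ℕ → ℕ → ℝ, f = fun k s =>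
      ∏ l ∈ Finset.Ico 1 k, ∑ u ∈ Finset.range (s + 1), cV' l u := ⟨_, rfl⟩
  have hIcoL : ∀ k l, k ≤ L → l ∈ Finset.Ico 1 k → 1 ≤ l ∧ l ≤ L - 1 := by
    intro k l hk hl
    simp only [Finset.mem_Ico] at hl
    exact ⟨hl.1, by omega⟩
  have hHpSM : ∀ k s, k ≤ L → s ≤ T + 1 → StronglyMeasurable[ℱ s] (Hp k s) := by
    intro k s hk hs
    simp only [hHpdef]
    refine Finset.stronglyMeasurable_fun_prod (m := ℱ s) _ fun l hl => ?_
    refine Finset.stronglyMeasurable_fun_sum (m := ℱ s) _ fun u hu => ?_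
    simp only [Finset.mem_range] at hu
    have hu' : u ≤ s := by omega
    obtain ⟨hl1, hl2⟩ := hIcoL k l hk hl
    have hind : StronglyMeasurable[ℱ s] (fun ω => if τ l ω = u then (1:ℝ) else 0) :=
      (wd_sm_ite (p := fun ω => τ l ω = u) (by simpa using (hst l).measurableSet_eq u)).mono (ℱ.mono hu')
    exact hind.mul (((hV l u hl1 hl2 (by omega)).1).mono (ℱ.mono hu'))
  have hHpBdd : ∀ k s ω, k ≤ L → s ≤ T + 1 → |Hp k s ω| ≤ cHp k s := by
    intro k s ω hk hs
    simp only [hHpdef, hcHpdef]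
    rw [Finset.abs_prod]
    refine Finset.prod_le_prod (fun l _ => abs_nonneg _) fun l hl => ?_
    obtain ⟨hl1, hl2⟩ := hIcoL k l hk hl
    refine le_trans (Finset.abs_sum_le_sum_abs _ _) (Finset.sum_le_sum fun u hu => ?_)
    simp only [Finset.mem_range] at hu
    by_cases h : τ l ω = u
    · rw [if_pos h, one_mul, abs_of_pos ((hV l u hl1 hl2 (by omega)).2.1 ω)]
      exact hcV'le l u ω hl1 hl2 (by omega)
    · rw [if_neg h, zero_mul, abs_zero]
      exact hcV'nn l u
  have hcHpnn : ∀ k s, 0 ≤ cHp k s := by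
    intro k s; rw [hcHpdef]
    exact Finset.prod_nonneg fun l _ => Finset.sum_nonneg fun u _ => hcV'nn l u
  -- ### the processes G and D
  obtain ⟨G, hGdef⟩ : ∃ f : ℕ → ℕ → ℕ → Ω → ℝ, f = fun k s r ω =>
      (if J (k - 1) ω = s then (1 : ℝ) else 0) *
        ((if r < J k ω then (1 : ℝ) else 0) * Hp k s ω) := ⟨_, rfl⟩
  obtain ⟨D, hDdef⟩ : ∃ f : ℕ → ℕ → ℕ → Ω → ℝ, f = fun k s r ω =>
      if s ≤ r then G k s r ω * (N k s (r + 1) ω - N k s r ω) else 0 := ⟨_, rfl⟩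
  have hGSM : ∀ k s r, 1 ≤ k → k ≤ L → s ≤ T + 1 → s ≤ r →
      StronglyMeasurable[ℱ r] (G k s r) := by
    intro k s r hk1 hk2 hsT hsr
    simp only [hGdef]
    have hind1 : StronglyMeasurable[ℱ r] (fun ω => if J (k - 1) ω = s then (1:ℝ) else 0) := by
      by_cases hk : k = 1
      · have h : (fun ω => if J (k - 1) ω = s then (1:ℝ) else 0)
            = fun ω => if i = s then (1:ℝ) else 0 := by
          funext ω; rw [hk]; rw [hJ0 ω]
        rw [h]
        exact wd_sm_ite (m := ℱ r) (MeasurableSet.const _)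
      · have h : (fun ω => if J (k - 1) ω = s then (1:ℝ) else 0)
            = fun ω => if τ (k - 1) ω = s then (1:ℝ) else 0 := by
          funext ω; rw [hJp (k - 1) (by omega) (by omega) ω]
        rw [h]
        exact (wd_sm_ite (p := fun ω => τ (k - 1) ω = s) (by simpa using (hst (k - 1)).measurableSet_eq s)).mono (ℱ.mono hsr)
    have hind2 : StronglyMeasurable[ℱ r] (fun ω => if r < J k ω then (1:ℝ) else 0) := by
      have h : (fun ω => if r < J k ω then (1:ℝ) else 0)
          = fun ω => if ¬ (τ k ω ≤ r) then (1:ℝ) else 0 := by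
        funext ω; rw [hJp k hk1 hk2 ω]
        by_cases hc : r < τ k ω
        · rw [if_pos hc, if_pos (by omega)]
        · rw [if_neg hc, if_neg (not_not.mpr (by omega))]
      rw [h]
      exact wd_sm_ite (p := fun ω => ¬ (τ k ω ≤ r)) (show MeasurableSet[ℱ r] {ω | τ k ω ≤ r} by simpa using hst k r).compl
    exact hind1.mul (hind2.mul ((hHpSM k s hk2 hsT).mono (ℱ.mono hsr)))
  have hGBdd : ∀ k s r ω, 1 ≤ k → k ≤ L → s ≤ T + 1 → |G k s r ω| ≤ cHp k s := by
    intro k s r ω hk1 hk2 hsT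
    simp only [hGdef]
    have h1 : |Hp k s ω| ≤ cHp k s := hHpBdd k s ω hk2 hsT
    have h2a : |if J (k - 1) ω = s then (1:ℝ) else 0| ≤ 1 := by split <;> simp
    have h2b : |if r < J k ω then (1:ℝ) else 0| ≤ 1 := by split <;> simp
    calc |(if J (k - 1) ω = s then (1:ℝ) else 0) *
            ((if r < J k ω then (1:ℝ) else 0) * Hp k s ω)|
        = |if J (k - 1) ω = s then (1:ℝ) else 0| *
            (|if r < J k ω then (1:ℝ) else 0| * |Hp k s ω|) := by rw [abs_mul, abs_mul]
      _ ≤ 1 * (1 * cHp k s) := by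
          refine mul_le_mul h2a (mul_le_mul h2b h1 (abs_nonneg _) zero_le_one)
            (mul_nonneg (abs_nonneg _) (abs_nonneg _)) zero_le_one
      _ = cHp k s := by ring
  have hDInt : ∀ k s r, 1 ≤ k → k ≤ L → s ≤ T + 1 → Integrable (D k s r) μ := by
    intro k s r hk1 hk2 hsT
    by_cases hsr : s ≤ r
    · have h : D k s r = fun ω => G k s r ω * (N k s (r + 1) ω - N k s r ω) := by
        funext ω; simp only [hDdef]; rw [if_pos hsr]
      rw [h]
      exact ((hNInt k s (r + 1) hk1 hk2).sub (hNInt k s r hk1 hk2)).bdd_mul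
        (((hGSM k s r hk1 hk2 hsT hsr).mono (ℱ.le r)).aestronglyMeasurable)
        (Filter.Eventually.of_forall fun ω => by
          rw [Real.norm_eq_abs]; exact hGBdd k s r ω hk1 hk2 hsT)
    · have h : D k s r = fun ω => (0:ℝ) := by
        funext ω; simp only [hDdef]; rw [if_neg hsr]
      rw [h]
      exact integrable_const 0
  have hDzero : ∀ k s r, 1 ≤ k → k ≤ L → i ≤ s → s ≤ T + 1 →
      μ[D k s r|ℱ i] =ᵐ[μ] 0 := by
    intro k s r hk1 hk2 his hsT
    by_cases hsr : s ≤ r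
    · have h : D k s r = fun ω => G k s r ω * (N k s (r + 1) ω - N k s r ω) := by
        funext ω; simp only [hDdef]; rw [if_pos hsr]
      rw [h]
      exact wd_condexp_mul_incr μ ℱ (N k s) (fun t => hNSM k s t hk1 hk2)
        (fun t => hNInt k s t hk1 hk2) (fun t => hNmart k s t hk1 hk2)
        (G k s r) i r (his.trans hsr) (hGSM k s r hk1 hk2 hsT hsr) (cHp k s)
        (fun ω => hGBdd k s r ω hk1 hk2 hsT)
    · have h : D k s r = (0 : Ω → ℝ) := by
        funext ω; simp only [hDdef]; rw [if_neg hsr]; rfl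
      rw [h]
      exact Filter.EventuallyEq.of_eq condExp_zero
  -- ### pointwise identity C = ∑∑∑ D
  have hCpt : ∀ ω, C ω = ∑ k ∈ Finset.Icc 1 L, ∑ s ∈ Finset.Icc i (T + 1),
      ∑ r ∈ Finset.Ico i (T + 1), D k s r ω := by
    intro ω
    simp only [hCdef]
    refine Finset.sum_congr rfl fun k hk => ?_
    simp only [Finset.mem_Icc] at hk
    obtain ⟨hk1, hk2⟩ := hk
    have hs0i : i ≤ J (k - 1) ω := hJlb (k - 1) (by omega) ω
    have hs0T : J (k - 1) ω ≤ T + 1 := hJub (k - 1) (by omega) ω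
    have hs0mem : J (k - 1) ω ∈ Finset.Icc i (T + 1) := Finset.mem_Icc.mpr ⟨hs0i, hs0T⟩
    have hs0le : J (k - 1) ω ≤ J k ω := hJmono (k - 1) k (by omega) hk2 ω
    have hJkub : J k ω ≤ T + 1 := hJub k hk2 ω
    rw [Finset.sum_eq_single_of_mem _ hs0mem (fun s _ hne => Finset.sum_eq_zero fun r _ => by
      simp only [hDdef, hGdef]
      split
      · rw [if_neg (fun h => hne (by rw [← h]))]; ring
      · rfl)]
    have hHpeq : Hp k (J (k - 1) ω) ω = ∏ l ∈ Finset.Ico 1 k, V l (J l ω) ω := by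
      simp only [hHpdef]
      refine Finset.prod_congr rfl fun l hl => ?_
      simp only [Finset.mem_Ico] at hl
      have hlk : τ l ω ≤ J (k - 1) ω := by
        rw [hJp (k - 1) (by omega) (by omega) ω]
        exact hmono' (k - 1) l hl.1 (by omega) (by omega) ω
      have h1 : ∀ u ∈ Finset.range (J (k - 1) ω + 1),
          (if τ l ω = u then (1:ℝ) else 0) * V l u ω
            = if τ l ω = u then V l u ω else 0 := by
        intro u _; split <;> ring
      rw [Finset.sum_congr rfl h1,
        Finset.sum_ite_eq (Finset.range (J (k - 1) ω + 1)) (τ l ω) (fun u => V l u ω),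
        if_pos (Finset.mem_range.mpr (by omega)), hJp l hl.1 (by omega) ω]
    have htel : ∑ r ∈ Finset.Ico (J (k - 1) ω) (T + 1),
        (if r < J k ω then N k (J (k - 1) ω) (r + 1) ω - N k (J (k - 1) ω) r ω else 0)
          = N k (J (k - 1) ω) (J k ω) ω - N k (J (k - 1) ω) (J (k - 1) ω) ω :=
      by exact wd_telescope (fun t => N k (J (k - 1) ω) t ω) _ _ _ hs0le hJkub
    have hsplit : ∀ h : ℕ → ℝ, ∑ r ∈ Finset.Ico i (T + 1),
        (if J (k - 1) ω ≤ r then h r else 0) = ∑ r ∈ Finset.Ico (J (k - 1) ω) (T + 1), h r := by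
      intro h
      rw [← Finset.sum_Ico_consecutive _ hs0i hs0T]
      have hz : ∑ r ∈ Finset.Ico i (J (k - 1) ω), (if J (k - 1) ω ≤ r then h r else 0) = 0 :=
        Finset.sum_eq_zero fun r hr => by
          simp only [Finset.mem_Ico] at hr; rw [if_neg (by omega)]
      have ho : ∑ r ∈ Finset.Ico (J (k - 1) ω) (T + 1), (if J (k - 1) ω ≤ r then h r else 0)
          = ∑ r ∈ Finset.Ico (J (k - 1) ω) (T + 1), h r :=
        Finset.sum_congr rfl fun r hr => by
          simp only [Finset.mem_Ico] at hr; rw [if_pos hr.1]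
      rw [hz, zero_add, ho]
    have hDr : ∀ r, D k (J (k - 1) ω) r ω
        = if J (k - 1) ω ≤ r then
            (if r < J k ω then N k (J (k - 1) ω) (r + 1) ω - N k (J (k - 1) ω) r ω else 0)
              * Hp k (J (k - 1) ω) ω
          else 0 := by
      intro r
      simp only [hDdef, hGdef]
      split
      · rw [if_true]
        by_cases h2 : r < J k ω
        · rw [if_pos h2, if_pos h2]; ring
        · rw [if_neg h2, if_neg h2]; ring
      · rfl
    calc (∏ l ∈ Finset.Ico 1 k, V l (J l ω) ω) *
            (M k (J (k - 1) ω) ω - M k (J k ω) ω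
              + ce k (J (k - 1) ω) (J k ω) ω - ce k (J (k - 1) ω) (J (k - 1) ω) ω)
        = (∑ r ∈ Finset.Ico (J (k - 1) ω) (T + 1),
            (if r < J k ω then N k (J (k - 1) ω) (r + 1) ω - N k (J (k - 1) ω) r ω else 0))
              * Hp k (J (k - 1) ω) ω := by
          rw [htel, hHpeq]
          simp only [hNdef]
          ring
      _ = ∑ r ∈ Finset.Ico (J (k - 1) ω) (T + 1),
            (if r < J k ω then N k (J (k - 1) ω) (r + 1) ω - N k (J (k - 1) ω) r ω else 0)
              * Hp k (J (k - 1) ω) ω := Finset.sum_mul _ _ _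
      _ = ∑ r ∈ Finset.Ico i (T + 1), (if J (k - 1) ω ≤ r then
            (if r < J k ω then N k (J (k - 1) ω) (r + 1) ω - N k (J (k - 1) ω) r ω else 0)
              * Hp k (J (k - 1) ω) ω else 0) := (hsplit _).symm
      _ = ∑ r ∈ Finset.Ico i (T + 1), D k (J (k - 1) ω) r ω :=
          Finset.sum_congr rfl fun r _ => (hDr r).symm
  -- ### integrability and vanishing conditional expectation of C
  obtain ⟨F, hFdef⟩ : ∃ F : Finset (ℕ × ℕ × ℕ),
      F = Finset.Icc 1 L ×ˢ Finset.Icc i (T + 1) ×ˢ Finset.Ico i (T + 1) := ⟨_, rfl⟩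
  have hCeq : C = ∑ x ∈ F, (fun ω => D x.1 x.2.1 x.2.2 ω) := by
    funext ω
    rw [Finset.sum_apply, hFdef, Finset.sum_product, hCpt ω]
    exact Finset.sum_congr rfl fun k _ => by rw [Finset.sum_product]
  have hFmem : ∀ x ∈ F, 1 ≤ x.1 ∧ x.1 ≤ L ∧ i ≤ x.2.1 ∧ x.2.1 ≤ T + 1 := by
    intro x hx
    rw [hFdef] at hx
    simp only [Finset.mem_product, Finset.mem_Icc, Finset.mem_Ico] at hx
    exact ⟨hx.1.1, hx.1.2, hx.2.1.1, hx.2.1.2⟩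
  have hsumapp : (∑ x ∈ F, (fun ω => D x.1 x.2.1 x.2.2 ω))
      = fun ω => ∑ x ∈ F, D x.1 x.2.1 x.2.2 ω := by
    funext ω; rw [Finset.sum_apply]
  have hCint : Integrable C μ := by
    rw [hCeq, hsumapp]
    refine integrable_finset_sum F fun x hx => ?_
    obtain ⟨h1, h2, _, h4⟩ := hFmem x hx
    exact hDInt x.1 x.2.1 x.2.2 h1 h2 h4
  have hCzero : μ[C|ℱ i] =ᵐ[μ] 0 := by
    rw [hCeq]
    have h1 := condExp_finsetSum (m := ℱ i) (μ := μ)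
      (f := fun (x : ℕ × ℕ × ℕ) => fun ω => D x.1 x.2.1 x.2.2 ω) (s := F)
      (fun x hx => by obtain ⟨a1, a2, _, a4⟩ := hFmem x hx; exact hDInt x.1 x.2.1 x.2.2 a1 a2 a4)
    refine h1.trans ?_
    have h2 : ∀ᵐ ω ∂μ, ∀ x ∈ F, (μ[fun ω' => D x.1 x.2.1 x.2.2 ω'|ℱ i]) ω = 0 := by
      refine (Filter.eventually_all_finset F).mpr fun x hx => ?_
      obtain ⟨a1, a2, a3, a4⟩ := hFmem x hx
      filter_upwards [hDzero x.1 x.2.1 x.2.2 a1 a2 a3 a4] with ω hω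
      exact hω
    filter_upwards [h2] with ω hω
    rw [Finset.sum_apply]
    simp only [Pi.zero_apply]
    exact Finset.sum_eq_zero fun x hx => hω x hx
  -- ### integrability of P
  have hPint : Integrable P μ := by
    have hPeq : P = fun ω => ∑ p ∈ Finset.Icc 1 L,
        (∑ t ∈ Finset.range (T + 2), (if τ p ω = t then (1:ℝ) else 0) * U p t ω)
          * Hp p (T + 1) ω := by
      funext ω
      simp only [hPdef]
      refine Finset.sum_congr rfl fun p hp => ?_
      simp only [Finset.mem_Icc] at hp
      have hU' : ∑ t ∈ Finset.range (T + 2), (if τ p ω = t then (1:ℝ) else 0) * U p t ω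
          = U p (τ p ω) ω := by
        have h1 : ∀ t ∈ Finset.range (T + 2), (if τ p ω = t then (1:ℝ) else 0) * U p t ω
            = if τ p ω = t then U p t ω else 0 := by intro t _; split <;> ring
        rw [Finset.sum_congr rfl h1, Finset.sum_ite_eq _ (τ p ω) (fun t => U p t ω),
          if_pos (Finset.mem_range.mpr (by have := hτub p hp.1 hp.2 ω; omega))]
      have hHp' : Hp p (T + 1) ω = ∏ l ∈ Finset.Ico 1 p, V l (τ l ω) ω := by
        simp only [hHpdef]
        refine Finset.prod_congr rfl fun l hl => ?_
        simp only [Finset.mem_Ico] at hl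
        have h1 : ∀ u ∈ Finset.range (T + 2), (if τ l ω = u then (1:ℝ) else 0) * V l u ω
            = if τ l ω = u then V l u ω else 0 := by intro u _; split <;> ring
        rw [Finset.sum_congr rfl h1, Finset.sum_ite_eq _ (τ l ω) (fun u => V l u ω),
          if_pos (Finset.mem_range.mpr (by have := hτub l hl.1 (by omega) ω; omega))]
      rw [hU', hHp']
    rw [hPeq]
    refine integrable_finset_sum _ fun p hp => ?_
    simp only [Finset.mem_Icc] at hp
    have hint : Integrable (fun ω => ∑ t ∈ Finset.range (T + 2),
        (if τ p ω = t then (1:ℝ) else 0) * U p t ω) μ := by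
      refine integrable_finset_sum _ fun t ht => ?_
      simp only [Finset.mem_range] at ht
      exact ((hU p t hp.1 hp.2 (by omega)).2).bdd_mul (c := 1)
        (((wd_sm_ite (p := fun ω => τ p ω = t) (by simpa using (hst p).measurableSet_eq t)).mono (ℱ.le t)).aestronglyMeasurable)
        (Filter.Eventually.of_forall fun ω => by rw [Real.norm_eq_abs]; split <;> simp)
    have hfin := hint.bdd_mul
      (((hHpSM p (T + 1) hp.2 le_rfl).mono (ℱ.le (T + 1))).aestronglyMeasurable)
      (Filter.Eventually.of_forall fun ω => by
        rw [Real.norm_eq_abs]; exact hHpBdd p (T + 1) ω hp.2 le_rfl)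
    exact hfin.congr (Filter.Eventually.of_forall fun ω => mul_comm _ _)
  -- ### the finite encoding of chains
  obtain ⟨ext, hextdef⟩ : ∃ f : (Fin (L + 1) → Fin (T + 2)) → ℕ → ℕ,
      f = fun gg p => if h : p ≤ L then (if p = 0 then i else (gg ⟨p, by omega⟩ : ℕ)) else 0 :=
    ⟨_, rfl⟩
  have hextub : ∀ gg p, ext gg p ≤ T + 1 := by
    intro gg p; rw [hextdef]; simp only
    split
    · split
      · exact hi
      · exact Nat.lt_succ_iff.mp (Fin.is_lt _)
    · exact Nat.zero_le _
  have hext0 : ∀ gg, ext gg 0 = i := by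
    intro gg; rw [hextdef]; simp
  have hPrefMono : ∀ j : ℕ → ℕ, PrefChain i L (T + 1) j → ∀ p q, p ≤ q → q ≤ L → j p ≤ j q := by
    intro j hj p q
    obtain ⟨-, hmono, -, -⟩ := hj
    induction q with
    | zero =>
      intro hpq _
      have hp0 : p = 0 := by omega
      rw [hp0]
    | succ n ih =>
      intro hpq hq
      rcases Nat.lt_or_ge p (n + 1) with hp | hp
      · exact le_trans (ih (by omega) (by omega)) (hmono n (by omega))
      · have hpn : p = n + 1 := by omega
        rw [hpn]
  have hPrefub : ∀ j : ℕ → ℕ, PrefChain i L (T + 1) j → ∀ p, j p ≤ T + 1 := by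
    intro j hj p
    rcases le_or_gt p L with hp | hp
    · exact le_trans (hPrefMono j hj p L hp le_rfl) hj.2.2.1
    · rw [hj.2.2.2 p hp]; exact Nat.zero_le _
  have hrange : ∀ j : ℕ → ℕ, PrefChain i L (T + 1) j → ∃ gg, ext gg = j := by
    intro j hj
    refine ⟨fun p => ⟨j p, Nat.lt_succ_of_le (hPrefub j hj p)⟩, funext fun p => ?_⟩
    rw [hextdef]; simp only
    split
    · split
      · next h0 => rw [h0]; exact hj.1.symm
      · rfl
    · next h => exact (hj.2.2.2 p (by omega)).symm
  -- expr as a function of a deterministic chain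
  obtain ⟨expr, hexprdef⟩ : ∃ f : (ℕ → ℕ) → Ω → ℝ, f = fun j ω =>
      (∑ k ∈ Finset.Icc 1 L, U k (j k) ω * ∏ l ∈ Finset.Ico 1 k, V l (j l) ω)
        + ∑ k ∈ Finset.Icc 1 L, (∏ l ∈ Finset.Ico 1 k, V l (j l) ω) *
            (M k (j (k - 1)) ω - M k (j k) ω
              + ce k (j (k - 1)) (j k) ω - ce k (j (k - 1)) (j (k - 1)) ω) := ⟨_, rfl⟩
  have hZpt : ∀ ω, Z ω = sSup { x : ℝ | ∃ j : ℕ → ℕ,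
      PrefChain i L (T + 1) j ∧ SatCons v ρ 1 L j ω ∧ x = expr j ω } := by
    intro ω
    rw [hZdef, hexprdef, hce]
  -- ### feasibility of the always-(T+1) chain
  obtain ⟨g0, hg0def⟩ : ∃ g0 : Fin (L + 1) → Fin (T + 2),
      g0 = fun _ => (⟨T + 1, by omega⟩ : Fin (T + 2)) := ⟨_, rfl⟩
  have hextg0 : ∀ p, 1 ≤ p → p ≤ L → ext g0 p = T + 1 := by
    intro p h1 h2; rw [hextdef, hg0def]; simp only
    rw [dif_pos h2, if_neg (by omega)]
  have hQ0 : ∀ ω, PrefChain i L (T + 1) (ext g0) ∧ SatCons v ρ 1 L (ext g0) ω := by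
    intro ω
    constructor
    · refine ⟨hext0 g0, ?_, ?_, ?_⟩
      · intro p hp
        rcases Nat.eq_zero_or_pos p with h0 | h0
        · rw [h0, hext0 g0, hextg0 1 le_rfl hL]; exact hi
        · rw [hextg0 p (by omega) (by omega), hextg0 (p + 1) (by omega) (by omega)]
      · rw [hextg0 L hL le_rfl]
      · intro p hp; rw [hextdef]; simp only; rw [dif_neg (by omega)]
    · constructor
      · intro l hl1 hl2
        have hE : ECount 1 l (ext g0) = l := by
          show ((Finset.Icc 1 l).filter fun r => ext g0 r = ext g0 l).card = l
          have hall : (Finset.Icc 1 l).filter (fun r => ext g0 r = ext g0 l)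
              = Finset.Icc 1 l := by
            refine Finset.filter_true_of_mem fun r hr => ?_
            simp only [Finset.mem_Icc] at hr
            rw [hextg0 r hr.1 (by omega), hextg0 l hl1 hl2]
          rw [hall, Nat.card_Icc]; omega
        show ECount 1 l (ext g0) ≤ v (ext g0 l) ω
        rw [hE, hextg0 l hl1 hl2, hvT ω]
        exact hl2
      · intro l hl1 hl2 hlt
        exfalso
        have he1 : ext g0 (l - 1) = T + 1 := hextg0 (l - 1) (by omega) (by omega)
        have he2 : ext g0 l = T + 1 := hextg0 l (by omega) hl2
        omega
  -- ### pointwise domination : P + C ≤ Z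
  have hpoint : ∀ ω, P ω + C ω ≤ Z ω := by
    intro ω
    rw [hZpt ω]
    have hmem : P ω + C ω ∈ { x : ℝ | ∃ j : ℕ → ℕ, PrefChain i L (T + 1) j ∧
        SatCons v ρ 1 L j ω ∧ x = expr j ω } := by
      refine ⟨fun p => J p ω, ⟨hJ0 ω, ?_, hJub L le_rfl ω, ?_⟩, ?_, ?_⟩
      · intro p hp; exact hJmono p (p + 1) (by omega) (by omega) ω
      · intro p hp; rw [hJdef]; simp only; rw [if_neg (by omega), if_neg (by omega)]
      · obtain ⟨hc1, hc2⟩ := hcons ω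
        constructor
        · intro l hl1 hl2
          have hEq : ECount 1 l (fun p => J p ω) = ECount 1 l (fun p => τ p ω) :=
            wd_ECount_congr (fun r hr1 hr2 => hJp r hr1 (by omega) ω)
          show ECount 1 l (fun p => J p ω) ≤ v (J l ω) ω
          rw [hEq, hJp l hl1 hl2 ω]
          exact hc1 l hl1 hl2
        · intro l hl1 hl2 hlt
          show ρ (J (l - 1) ω) ω ≤ J l ω
          have hlt' : J (l - 1) ω < J l ω := hlt
          rw [hJp (l - 1) (by omega) (by omega) ω, hJp l (by omega) hl2 ω] at hlt' ⊢
          exact hc2 l hl1 hl2 hlt'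
      · simp only [hexprdef]
        have h1 : P ω = ∑ k ∈ Finset.Icc 1 L,
            U k (J k ω) ω * ∏ l ∈ Finset.Ico 1 k, V l (J l ω) ω := by
          simp only [hPdef]
          refine Finset.sum_congr rfl fun p hp => ?_
          simp only [Finset.mem_Icc] at hp
          rw [hJp p hp.1 hp.2 ω]
          refine congrArg _ (Finset.prod_congr rfl fun l hl => ?_)
          simp only [Finset.mem_Ico] at hl
          rw [hJp l hl.1 (by omega) ω]
        have h2 : C ω = ∑ k ∈ Finset.Icc 1 L, (∏ l ∈ Finset.Ico 1 k, V l (J l ω) ω) *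
            (M k (J (k - 1) ω) ω - M k (J k ω) ω
              + ce k (J (k - 1) ω) (J k ω) ω - ce k (J (k - 1) ω) (J (k - 1) ω) ω) := by
          simp only [hCdef]
        rw [h1, h2]
    have hsub : { x : ℝ | ∃ j, PrefChain i L (T + 1) j ∧ SatCons v ρ 1 L j ω ∧ x = expr j ω }
        ⊆ Set.range (fun gg : Fin (L + 1) → Fin (T + 2) => expr (ext gg) ω) := by
      rintro x ⟨j, hp, hs, rfl⟩
      obtain ⟨gg, hgg⟩ := hrange j hp
      exact ⟨gg, by show expr (ext gg) ω = expr j ω; rw [hgg]⟩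
    exact le_csSup ((Set.finite_range _).bddAbove.mono hsub) hmem
  -- ### Z as a finite sup
  obtain ⟨Q, hQdef⟩ : ∃ f : (Fin (L + 1) → Fin (T + 2)) → Ω → Prop, f = fun gg ω =>
      PrefChain i L (T + 1) (ext gg) ∧ SatCons v ρ 1 L (ext gg) ω := ⟨_, rfl⟩
  have huniv : (Finset.univ : Finset (Fin (L + 1) → Fin (T + 2))).Nonempty :=
    Finset.univ_nonempty
  have hZsup : ∀ ω, Z ω = Finset.univ.sup' huniv
      (fun gg => if Q gg ω then expr (ext gg) ω else expr (ext g0) ω) := by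
    intro ω
    rw [hZpt ω, Finset.sup'_eq_csSup_image]
    congr 1
    rw [Finset.coe_univ, Set.image_univ]
    ext x
    constructor
    · rintro ⟨j, hp, hs, rfl⟩
      obtain ⟨gg, hgg⟩ := hrange j hp
      refine ⟨gg, ?_⟩
      have hq : Q gg ω := by simp only [hQdef]; rw [hgg]; exact ⟨hp, hs⟩
      show (if Q gg ω then expr (ext gg) ω else expr (ext g0) ω) = expr j ω
      rw [if_pos hq, hgg]
    · rintro ⟨gg, rfl⟩
      show (if Q gg ω then expr (ext gg) ω else expr (ext g0) ω)
        ∈ {x | ∃ j, PrefChain i L (T + 1) j ∧ SatCons v ρ 1 L j ω ∧ x = expr j ω}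
      by_cases hq : Q gg ω
      · rw [if_pos hq]
        simp only [hQdef] at hq
        exact ⟨ext gg, hq.1, hq.2, rfl⟩
      · rw [if_neg hq]
        exact ⟨ext g0, (hQ0 ω).1, (hQ0 ω).2, rfl⟩
  -- ### measurability and integrability of expr
  have hexprSM : ∀ j : ℕ → ℕ, (∀ p, 1 ≤ p → p ≤ L → j p ≤ T + 1) →
      StronglyMeasurable (expr j) := by
    intro j hj
    simp only [hexprdef]
    apply StronglyMeasurable.add
    · refine Finset.stronglyMeasurable_fun_sum (m := m0) _ fun k hk => ?_
      simp only [Finset.mem_Icc] at hk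
      refine ((hU k (j k) hk.1 hk.2 (hj k hk.1 hk.2)).1.mono (ℱ.le _)).mul ?_
      refine Finset.stronglyMeasurable_fun_prod (m := m0) _ fun l hl => ?_
      obtain ⟨hl1, hl2⟩ := hIcoL k l hk.2 hl
      exact (hV l (j l) hl1 hl2 (hj l hl1 (by omega))).1.mono (ℱ.le _)
    · refine Finset.stronglyMeasurable_fun_sum (m := m0) _ fun k hk => ?_
      simp only [Finset.mem_Icc] at hk
      refine StronglyMeasurable.mul ?_ ?_
      · refine Finset.stronglyMeasurable_fun_prod (m := m0) _ fun l hl => ?_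
        obtain ⟨hl1, hl2⟩ := hIcoL k l hk.2 hl
        exact (hV l (j l) hl1 hl2 (hj l hl1 (by omega))).1.mono (ℱ.le _)
      · have hMsm : ∀ t, StronglyMeasurable (M k t) := fun t =>
          ((hM k hk.1 hk.2).1 t (Nat.zero_le t)).mono (ℱ.le t)
        have hcesm : ∀ s t, StronglyMeasurable (ce k s t) := fun s t =>
          (hceSM k s t).mono (ℱ.le t)
        exact (((hMsm _).sub (hMsm _)).add (hcesm _ _)).sub (hcesm _ _)
  have hexprInt : ∀ j : ℕ → ℕ, (∀ p, 1 ≤ p → p ≤ L → j p ≤ T + 1) →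
      Integrable (expr j) μ := by
    intro j hj
    have hVSM : ∀ k, k ≤ L → StronglyMeasurable
        (fun ω => ∏ l ∈ Finset.Ico 1 k, V l (j l) ω) := by
      intro k hk
      refine Finset.stronglyMeasurable_fun_prod (m := m0) _ fun l hl => ?_
      obtain ⟨hl1, hl2⟩ := hIcoL k l hk hl
      exact (hV l (j l) hl1 hl2 (hj l hl1 (by omega))).1.mono (ℱ.le _)
    have hVbd : ∀ k, k ≤ L → ∀ ω, ‖∏ l ∈ Finset.Ico 1 k, V l (j l) ω‖
        ≤ ∏ l ∈ Finset.Ico 1 k, cV' l (j l) := by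
      intro k hk ω
      rw [Real.norm_eq_abs, Finset.abs_prod]
      refine Finset.prod_le_prod (fun l _ => abs_nonneg _) fun l hl => ?_
      obtain ⟨hl1, hl2⟩ := hIcoL k l hk hl
      rw [abs_of_pos ((hV l (j l) hl1 hl2 (hj l hl1 (by omega))).2.1 ω)]
      exact hcV'le l (j l) ω hl1 hl2 (hj l hl1 (by omega))
    simp only [hexprdef]
    apply Integrable.add
    · refine integrable_finset_sum _ fun k hk => ?_
      simp only [Finset.mem_Icc] at hk
      have h := ((hU k (j k) hk.1 hk.2 (hj k hk.1 hk.2)).2).bdd_mul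
        ((hVSM k hk.2).aestronglyMeasurable)
        (Filter.Eventually.of_forall (hVbd k hk.2))
      exact h.congr (Filter.Eventually.of_forall fun ω => mul_comm _ _)
    · refine integrable_finset_sum _ fun k hk => ?_
      simp only [Finset.mem_Icc] at hk
      have hint : Integrable (fun ω => M k (j (k - 1)) ω - M k (j k) ω
          + ce k (j (k - 1)) (j k) ω - ce k (j (k - 1)) (j (k - 1)) ω) μ := by
        exact ((((hM k hk.1 hk.2).2.1 _ (Nat.zero_le _)).sub
          ((hM k hk.1 hk.2).2.1 _ (Nat.zero_le _))).add (hceInt _ _ _)).sub (hceInt _ _ _)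
      exact hint.bdd_mul ((hVSM k hk.2).aestronglyMeasurable)
        (Filter.Eventually.of_forall (hVbd k hk.2))
  have hextvalid : ∀ gg, ∀ p, 1 ≤ p → p ≤ L → ext gg p ≤ T + 1 := fun gg p _ _ => hextub gg p
  -- ### measurability of the constraint events
  have hSatMeas : ∀ j : ℕ → ℕ, (∀ p, j p ≤ T + 1) →
      MeasurableSet {ω | SatCons v ρ 1 L j ω} := by
    intro j hj
    have hrep : {ω | SatCons v ρ 1 L j ω}
        = (⋂ l, {ω | 1 ≤ l → l ≤ L → ECount 1 l j ≤ v (j l) ω})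
          ∩ ⋂ l, {ω | 1 < l → l ≤ L → j (l - 1) < j l → ρ (j (l - 1)) ω ≤ j l} := by
      ext ω
      simp only [SatCons, Set.mem_inter_iff, Set.mem_iInter, Set.mem_setOf_eq]
    rw [hrep]
    refine MeasurableSet.inter (MeasurableSet.iInter fun l => ?_)
      (MeasurableSet.iInter fun l => ?_)
    · by_cases hc : 1 ≤ l ∧ l ≤ L
      · have he : {ω | 1 ≤ l → l ≤ L → ECount 1 l j ≤ v (j l) ω}
            = v (j l) ⁻¹' Set.Ici (ECount 1 l j) := by
          ext ω
          simp only [Set.mem_setOf_eq, Set.mem_preimage, Set.mem_Ici]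
          exact ⟨fun h => h hc.1 hc.2, fun h _ _ => h⟩
        rw [he]
        exact ℱ.le (j l) _ ((hvad (j l) (hj l)) measurableSet_Ici)
      · have he : {ω | 1 ≤ l → l ≤ L → ECount 1 l j ≤ v (j l) ω} = Set.univ := by
          ext ω
          simp only [Set.mem_setOf_eq, Set.mem_univ, iff_true]
          intro h1 h2; exact absurd ⟨h1, h2⟩ hc
        rw [he]; exact MeasurableSet.univ
    · by_cases hc : 1 < l ∧ l ≤ L ∧ j (l - 1) < j l
      · have he : {ω | 1 < l → l ≤ L → j (l - 1) < j l → ρ (j (l - 1)) ω ≤ j l}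
            = {ω | ρ (j (l - 1)) ω ≤ j l} := by
          ext ω
          simp only [Set.mem_setOf_eq]
          exact ⟨fun h => h hc.1 hc.2.1 hc.2.2, fun h _ _ _ => h⟩
        rw [he]
        have hjT : j (l - 1) ≤ T := by
          have h1 := hj l
          omega
        exact ℱ.le (j l) _ (by simpa using (hρ (j (l - 1)) hjT).1 (j l))
      · have he : {ω | 1 < l → l ≤ L → j (l - 1) < j l → ρ (j (l - 1)) ω ≤ j l}
            = Set.univ := by
          ext ω
          simp only [Set.mem_setOf_eq, Set.mem_univ, iff_true]
          intro h1 h2 h3; exact absurd ⟨h1, h2, h3⟩ hc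
        rw [he]; exact MeasurableSet.univ
  have hQmeas : ∀ gg, MeasurableSet {ω | Q gg ω} := by
    intro gg
    by_cases hp : PrefChain i L (T + 1) (ext gg)
    · have he : {ω | Q gg ω} = {ω | SatCons v ρ 1 L (ext gg) ω} := by
        ext ω; simp only [hQdef, Set.mem_setOf_eq, hp, true_and]
      rw [he]; exact hSatMeas (ext gg) (hextub gg)
    · have he : {ω | Q gg ω} = ∅ := by
        ext ω
        simp only [hQdef, Set.mem_setOf_eq, hp, false_and, Set.mem_empty_iff_false]
      rw [he]; exact MeasurableSet.empty
  -- ### integrability of Z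
  have hZSM : StronglyMeasurable Z := by
    have h : Z = fun ω => Finset.univ.sup' huniv
        (fun gg => if Q gg ω then expr (ext gg) ω else expr (ext g0) ω) := funext hZsup
    rw [h]
    refine wd_sm_sup' _ huniv _ fun gg _ => ?_
    have h2 : (fun ω => if Q gg ω then expr (ext gg) ω else expr (ext g0) ω)
        = fun ω => if ω ∈ {ω' | Q gg ω'} then expr (ext gg) ω else expr (ext g0) ω := rfl
    rw [h2]
    exact StronglyMeasurable.ite (hQmeas gg) (hexprSM _ (hextvalid gg)) (hexprSM _ (hextvalid g0))
  have hZint : Integrable Z μ := by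
    have hB : Integrable (fun ω => ∑ gg : Fin (L + 1) → Fin (T + 2),
        (|expr (ext gg) ω| + |expr (ext g0) ω|)) μ := by
      refine integrable_finset_sum _ fun gg _ => ?_
      exact ((hexprInt _ (hextvalid gg)).abs).add ((hexprInt _ (hextvalid g0)).abs)
    refine Integrable.mono' hB hZSM.aestronglyMeasurable
      (Filter.Eventually.of_forall fun ω => ?_)
    rw [Real.norm_eq_abs, hZsup ω, abs_le]
    constructor
    · refine le_trans ?_ (Finset.le_sup'
        (f := fun gg => if Q gg ω then expr (ext gg) ω else expr (ext g0) ω)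
        (Finset.mem_univ g0))
      rw [ite_self]
      have h1 : |expr (ext g0) ω| ≤ ∑ gg : Fin (L + 1) → Fin (T + 2),
          (|expr (ext gg) ω| + |expr (ext g0) ω|) := by
        refine le_trans (le_add_of_nonneg_left (abs_nonneg (expr (ext g0) ω)))
          (Finset.single_le_sum
            (f := fun gg => |expr (ext gg) ω| + |expr (ext g0) ω|)
            (fun gg _ => by positivity) (Finset.mem_univ g0))
      linarith [neg_abs_le (expr (ext g0) ω)]
    · refine Finset.sup'_le _ _ fun gg _ => ?_
      have h2 : (if Q gg ω then expr (ext gg) ω else expr (ext g0) ω)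
          ≤ |expr (ext gg) ω| + |expr (ext g0) ω| := by
        split
        · exact le_trans (le_abs_self _) (le_add_of_nonneg_right (abs_nonneg _))
        · exact le_trans (le_abs_self _) (le_add_of_nonneg_left (abs_nonneg _))
      exact le_trans h2 (Finset.single_le_sum
        (f := fun gg => |expr (ext gg) ω| + |expr (ext g0) ω|)
        (fun gg _ => by positivity) (Finset.mem_univ gg))
  -- ### conclusion
  have hsum : μ[fun ω => P ω + C ω|ℱ i] =ᵐ[μ] μ[P|ℱ i] + μ[C|ℱ i] := condExp_add hPint hCint _
  have hmonoZ : μ[fun ω => P ω + C ω|ℱ i] ≤ᵐ[μ] μ[Z|ℱ i] :=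
    condExp_mono (by exact hPint.add hCint) hZint
      (Filter.Eventually.of_forall fun ω => hpoint ω)
  filter_upwards [hsum, hmonoZ, hCzero] with ω e1 e2 e3
  have : (μ[P|ℱ i]) ω = (μ[fun ω => P ω + C ω|ℱ i]) ω - (μ[C|ℱ i]) ω := by
    rw [e1]; simp
  rw [this, e3]
  simpa using e2
end
end

section
/- Recursion for the pathwise dual maximum: for every L-tuple of martingales M = (M^1,…,M^L), every L-tuple of integrable adapted processes A = (A^1,…,A^L), every i = 0,…,T, and every n = 0,…,L, it holds almost surely that θ_i^{n,L}(M,A) = max{ θ_{i+1}^{n,L}(M,A) − (M_{i+1}^{L−n} − M_i^{L−n}), max over ν = 1,…,v_i ∧ (L−n) of ( Σ_{k=1}^{ν} ( ∏_{l=1}^{k−1} V_i^{l+n} ) U_i^{n+k} + ( ∏_{λ=1}^{ν} V_i^{λ+n} ) ( θ_{ρ^i}^{n+ν,L}(M,A) − (M_{ρ^i}^{L−n−ν} − M_i^{L−n−ν}) + A_{ρ^i}^{L−n−ν} − E[ A_{ρ^i}^{L−n−ν} | F_i ] ) ) }, with terminal condition θ_∂^{n,L}(M,A) = Σ_{k=1}^{L−n}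 ( ∏_{l=1}^{k−1} V_∂^{l+n} ) U_∂^{n+k}. -/
open MeasureTheory

noncomputable section

variable {Ω : Type*} [m0 : MeasurableSpace Ω]

/-- The pathwise dual maximum `θ_i^{n,L}(M, A)`: the maximum over constrained chains
`j 0 = i ≤ j 1 ≤ ... ≤ j (L-n) ≤ T+1` of the dual objective built from the tuple of
martingales `M` and the tuple of adapted processes `A`. -/
def theta (T L : ℕ) (μ : Measure Ω) (ℱ : Filtration ℕ m0)
    (U V : ℕ → ℕ → Ω → ℝ) (v ρ : ℕ → Ω → ℕ)
    (M A : ℕ → ℕ → Ω → ℝ) (n i : ℕ) (ω : Ω) : ℝ :=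
  sSup { x : ℝ | ∃ j : ℕ → ℕ,
    PrefChain i (L - n) (T + 1) j ∧ SatCons v ρ 1 (L - n) j ω ∧
    x = ∑ k ∈ Finset.Icc 1 (L - n),
      (∏ l ∈ Finset.Ico 1 k, V (l + n) (j l) ω) *
        (U (n + k) (j k) ω
          - (M (L - n - k + 1) (j k) ω - M (L - n - k + 1) (j (k - 1)) ω)
          + if 1 < k ∧ j (k - 1) < j k then
              A (L - k - n + 1) (ρ (j (k - 1)) ω) ω
                - (μ[(fun ω' => A (L - k - n + 1) (ρ (j (k - 1)) ω') ω')|ℱ (j (k - 1))]) ω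
            else 0) }

section RecAux

variable {T L : ℕ} {μ : Measure Ω} {ℱ : Filtration ℕ m0}
  {U V : ℕ → ℕ → Ω → ℝ} {v ρ : ℕ → Ω → ℕ} {M A : ℕ → ℕ → Ω → ℝ}

/-- The dual objective of a chain. -/
def thetaObj (T L : ℕ) (μ : Measure Ω) (ℱ : Filtration ℕ m0)
    (U V : ℕ → ℕ → Ω → ℝ) (ρ : ℕ → Ω → ℕ)
    (M A : ℕ → ℕ → Ω → ℝ) (n : ℕ) (j : ℕ → ℕ) (ω : Ω) : ℝ :=
  ∑ k ∈ Finset.Icc 1 (L - n),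
      (∏ l ∈ Finset.Ico 1 k, V (l + n) (j l) ω) *
        (U (n + k) (j k) ω
          - (M (L - n - k + 1) (j k) ω - M (L - n - k + 1) (j (k - 1)) ω)
          + if 1 < k ∧ j (k - 1) < j k then
              A (L - k - n + 1) (ρ (j (k - 1)) ω) ω
                - (μ[(fun ω' => A (L - k - n + 1) (ρ (j (k - 1)) ω') ω')|ℱ (j (k - 1))]) ω
            else 0)

/-- The set of values of the dual objective over constrained chains. -/
def thetaSet (T L : ℕ) (μ : Measure Ω) (ℱ : Filtration ℕ m0)
    (U V : ℕ → ℕ → Ω → ℝ) (v ρ : ℕ → Ω → ℕ)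
    (M A : ℕ → ℕ → Ω → ℝ) (n i : ℕ) (ω : Ω) : Set ℝ :=
  { x : ℝ | ∃ j : ℕ → ℕ,
    PrefChain i (L - n) (T + 1) j ∧ SatCons v ρ 1 (L - n) j ω ∧
    x = thetaObj T L μ ℱ U V ρ M A n j ω }

lemma theta_eq_sSup (n i : ℕ) (ω : Ω) :
    theta T L μ ℱ U V v ρ M A n i ω = sSup (thetaSet T L μ ℱ U V v ρ M A n i ω) := rfl

lemma prefChain_mono {i m d : ℕ} {j : ℕ → ℕ} (h : PrefChain i m d j) :
    ∀ p q, p ≤ q → q ≤ m → j p ≤ j q := by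
  intro p q hpq hqm
  induction q with
  | zero =>
    have : p = 0 := by omega
    simp [this]
  | succ q ih =>
    rcases Nat.eq_or_lt_of_le hpq with rfl | hlt
    · exact le_rfl
    · exact le_trans (ih (by omega) (by omega)) (h.2.1 q (by omega))

lemma prefChain_le {i m d : ℕ} {j : ℕ → ℕ} (h : PrefChain i m d j) :
    ∀ p, p ≤ m → j p ≤ d := fun p hp =>
  le_trans (prefChain_mono h p m hp le_rfl) h.2.2.1

lemma prefChain_finite (i m d : ℕ) : {j : ℕ → ℕ | PrefChain i m d j}.Finite := by
  have hsub : {j : ℕ → ℕ | PrefChain i m d j} ⊆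
      Set.range (fun (f : Fin (m + 1) → Fin (d + 1)) (p : ℕ) =>
        if h : p < m + 1 then (f ⟨p, h⟩ : ℕ) else 0) := by
    rintro j hj
    have hle : ∀ p, p ≤ m → j p ≤ d := prefChain_le hj
    refine ⟨fun p => ⟨j p, by have := hle p (by omega); omega⟩, ?_⟩
    funext p
    by_cases h : p < m + 1
    · simp [h]
    · simp only [h, dif_neg, not_false_iff]
      exact (hj.2.2.2 p (by omega)).symm
  exact (Set.finite_range _).subset hsub

lemma thetaSet_finite (n i : ℕ) (ω : Ω) :
    (thetaSet T L μ ℱ U V v ρ M A n i ω).Finite := by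
  refine Set.Finite.subset ((prefChain_finite i (L - n) (T + 1)).image
    (fun j => thetaObj T L μ ℱ U V ρ M A n j ω)) ?_
  rintro x ⟨j, h1, _, h3⟩
  exact ⟨j, h1, h3.symm⟩

/-- The canonical witness chain: jump to `T+1` immediately. -/
lemma exists_top_chain (n : ℕ) {i : ℕ} {ω : Ω} (hi : i ≤ T + 1) (hv : v (T + 1) ω = L) :
    ∃ j : ℕ → ℕ, PrefChain i (L - n) (T + 1) j ∧ SatCons v ρ 1 (L - n) j ω ∧
      j 0 = i ∧ ∀ p, 1 ≤ p → p ≤ L - n → j p = T + 1 := by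
  set w : ℕ → ℕ := fun p => if p = 0 then i else if p ≤ L - n then T + 1 else 0 with hw
  refine ⟨w, ?_, ?_, by simp [hw], fun p h1 h2 => by
    simp only [hw]; rw [if_neg (by omega), if_pos h2]⟩
  · refine ⟨by simp [hw], fun p hp => ?_, ?_, fun p hp => ?_⟩
    · have h1 : w (p + 1) = T + 1 := by simp only [hw]; rw [if_neg (by omega), if_pos (by omega)]
      rw [h1]
      by_cases h0 : p = 0
      · simp [hw, h0, hi]
      · simp only [hw]; rw [if_neg h0, if_pos (by omega)]
    · by_cases h0 : L - n = 0
      · rw [h0]; simpa [hw] using hi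
      · simp only [hw]; rw [if_neg (by omega), if_pos le_rfl]
    · simp only [hw]; rw [if_neg (by omega), if_neg (by omega)]
  · constructor
    · intro l hl1 hlm
      have hwl : ∀ r, 1 ≤ r → r ≤ L - n → w r = T + 1 := by
        intro r h1 h2; simp only [hw]; rw [if_neg (by omega), if_pos h2]
      have : ECount 1 l w = l := by
        unfold ECount
        rw [Finset.filter_true_of_mem, Nat.card_Icc]
        · omega
        · intro r hr
          simp only [Finset.mem_Icc] at hr
          rw [hwl r hr.1 (le_trans hr.2 hlm), hwl l hl1 hlm]
      rw [this, hwl l hl1 hlm, hv]; omega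
    · intro l hl1 hlm hjump
      have e1 : w (l - 1) = T + 1 := by
        simp only [hw]; rw [if_neg (by omega), if_pos (by omega)]
      have e2 : w l = T + 1 := by
        simp only [hw]; rw [if_neg (by omega), if_pos hlm]
      rw [e1, e2] at hjump; omega

lemma thetaSet_nonempty (n : ℕ) {i : ℕ} {ω : Ω} (hi : i ≤ T + 1) (hv : v (T + 1) ω = L) :
    (thetaSet T L μ ℱ U V v ρ M A n i ω).Nonempty := by
  obtain ⟨j, h1, h2, -, -⟩ := exists_top_chain n hi hv
  exact ⟨_, j, h1, h2, rfl⟩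

lemma thetaSet_bddAbove (n i : ℕ) (ω : Ω) :
    BddAbove (thetaSet T L μ ℱ U V v ρ M A n i ω) :=
  (thetaSet_finite n i ω).bddAbove

end RecAux
section RecAux2

variable {T L : ℕ} {μ : Measure Ω} {ℱ : Filtration ℕ m0}
  {U V : ℕ → ℕ → Ω → ℝ} {v ρ : ℕ → Ω → ℕ} {M A : ℕ → ℕ → Ω → ℝ}

/-- A single term of the dual objective. -/
def objTerm (T L : ℕ) (μ : Measure Ω) (ℱ : Filtration ℕ m0)
    (U V : ℕ → ℕ → Ω → ℝ) (ρ : ℕ → Ω → ℕ)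
    (M A : ℕ → ℕ → Ω → ℝ) (n k : ℕ) (j : ℕ → ℕ) (ω : Ω) : ℝ :=
  (∏ l ∈ Finset.Ico 1 k, V (l + n) (j l) ω) *
    (U (n + k) (j k) ω
      - (M (L - n - k + 1) (j k) ω - M (L - n - k + 1) (j (k - 1)) ω)
      + if 1 < k ∧ j (k - 1) < j k then
          A (L - k - n + 1) (ρ (j (k - 1)) ω) ω
            - (μ[(fun ω' => A (L - k - n + 1) (ρ (j (k - 1)) ω') ω')|ℱ (j (k - 1))]) ω
        else 0)

lemma thetaObj_eq_sum (n : ℕ) (j : ℕ → ℕ) (ω : Ω) :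
    thetaObj T L μ ℱ U V ρ M A n j ω =
      ∑ k ∈ Finset.Icc 1 (L - n), objTerm T L μ ℱ U V ρ M A n k j ω := rfl

/-- A term of the objective where the chain does not move. -/
lemma objTerm_stay {n k : ℕ} {j : ℕ → ℕ} {ω : Ω} (hk : 1 ≤ k)
    (h : j (k - 1) = j k) :
    objTerm T L μ ℱ U V ρ M A n k j ω =
      (∏ l ∈ Finset.Ico 1 k, V (l + n) (j l) ω) * U (n + k) (j k) ω := by
  unfold objTerm
  rw [h]
  simp [lt_irrefl]

/-- Terms only depend on the chain at positive indices, except for the start value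
appearing in the `k = 1` martingale increment. -/
lemma objTerm_congr_pos {n k : ℕ} {j j' : ℕ → ℕ} {ω : Ω} (hk : 2 ≤ k)
    (h : ∀ p, 1 ≤ p → j p = j' p) :
    objTerm T L μ ℱ U V ρ M A n k j' ω = objTerm T L μ ℱ U V ρ M A n k j ω := by
  unfold objTerm
  rw [h k (by omega), h (k - 1) (by omega),
    show (∏ l ∈ Finset.Ico 1 k, V (l + n) (j' l) ω) = ∏ l ∈ Finset.Ico 1 k, V (l + n) (j l) ω
      from Finset.prod_congr rfl fun l hl => by
        simp only [Finset.mem_Ico] at hl; rw [h l hl.1]]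

lemma objTerm_one {n : ℕ} {j j' : ℕ → ℕ} {ω : Ω} (hm : 1 ≤ L - n)
    (h : ∀ p, 1 ≤ p → j p = j' p) :
    objTerm T L μ ℱ U V ρ M A n 1 j' ω =
      objTerm T L μ ℱ U V ρ M A n 1 j ω + (M (L - n) (j' 0) ω - M (L - n) (j 0) ω) := by
  unfold objTerm
  have hidx : L - n - 1 + 1 = L - n := by omega
  simp only [Finset.Ico_self, Finset.prod_empty, one_mul, lt_irrefl, false_and, if_false,
    Nat.sub_self, hidx]
  rw [h 1 le_rfl]
  ring

lemma thetaObj_congr_start {n : ℕ} {j j' : ℕ → ℕ} {ω : Ω}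
    (h : ∀ p, 1 ≤ p → j p = j' p) (hm : 1 ≤ L - n) :
    thetaObj T L μ ℱ U V ρ M A n j' ω =
      thetaObj T L μ ℱ U V ρ M A n j ω + (M (L - n) (j' 0) ω - M (L - n) (j 0) ω) := by
  have h1 : (1 : ℕ) ∈ Finset.Icc 1 (L - n) := by simp [hm]
  rw [thetaObj_eq_sum, thetaObj_eq_sum, ← Finset.add_sum_erase _ _ h1, ← Finset.add_sum_erase _ _ h1,
    objTerm_one hm h,
    Finset.sum_congr rfl (g := fun k => objTerm T L μ ℱ U V ρ M A n k j ω)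
      (fun k hk => by
        simp only [Finset.mem_erase, Finset.mem_Icc] at hk
        exact objTerm_congr_pos (by omega) h)]
  ring

end RecAux2
section RecAux3

variable {T L : ℕ} {μ : Measure Ω} {ℱ : Filtration ℕ m0}
  {U V : ℕ → ℕ → Ω → ℝ} {v ρ : ℕ → Ω → ℕ} {M A : ℕ → ℕ → Ω → ℝ}

lemma objTerm_shift {n ν k i : ℕ} {j j' : ℕ → ℕ} {ω : Ω}
    (hν1 : 1 ≤ ν) (hk2 : 2 ≤ k) (hk : k ≤ L - n - ν)
    (hji : ∀ p, p ≤ ν → j p = i)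
    (hjt : ∀ p, 1 ≤ p → p ≤ L - n - ν → j (p + ν) = j' p) :
    objTerm T L μ ℱ U V ρ M A n (ν + k) j ω =
      (∏ l ∈ Finset.Icc 1 ν, V (l + n) i ω) * objTerm T L μ ℱ U V ρ M A (n + ν) k j' ω := by
  unfold objTerm
  have e1 : j (ν + k) = j' k := by
    rw [show ν + k = k + ν from by omega]; exact hjt k (by omega) hk
  have e2 : j (ν + k - 1) = j' (k - 1) := by
    rw [show ν + k - 1 = (k - 1) + ν from by omega]; exact hjt (k - 1) (by omega) (by omega)
  have eM : L - n - (ν + k) + 1 = L - (n + ν) - k + 1 := by omega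
  have eA : L - (ν + k) - n + 1 = L - k - (n + ν) + 1 := by omega
  have eU : n + (ν + k) = n + ν + k := by omega
  have eprod : (∏ l ∈ Finset.Ico 1 (ν + k), V (l + n) (j l) ω) =
      (∏ l ∈ Finset.Icc 1 ν, V (l + n) i ω) * ∏ l ∈ Finset.Ico 1 k, V (l + (n + ν)) (j' l) ω := by
    rw [← Finset.prod_Ico_consecutive _ (by omega : 1 ≤ ν + 1) (by omega : ν + 1 ≤ ν + k)]
    congr 1
    · rw [Finset.Ico_add_one_right_eq_Icc]
      exact Finset.prod_congr rfl fun l hl => by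
        simp only [Finset.mem_Icc] at hl; rw [hji l hl.2]
    · rw [show Finset.Ico (ν + 1) (ν + k) = (Finset.Ico 1 k).map (addLeftEmbedding ν) from
        (Finset.map_add_left_Ico _ _ _).symm, Finset.prod_map]
      refine Finset.prod_congr rfl fun l hl => ?_
      simp only [Finset.mem_Ico, addLeftEmbedding_apply] at hl ⊢
      have hjl : j (ν + l) = j' l := by
        rw [show ν + l = l + ν from by omega]; exact hjt l hl.1 (by omega)
      rw [show ν + l + n = l + (n + ν) from by omega, hjl]
  rw [eprod, e1, e2, eM, eA, eU]
  by_cases hjj : j' (k - 1) < j' k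
  · rw [if_pos (⟨by omega, hjj⟩ : 1 < ν + k ∧ j' (k - 1) < j' k),
      if_pos (⟨by omega, hjj⟩ : 1 < k ∧ j' (k - 1) < j' k)]
    ring
  · rw [if_neg (by tauto : ¬(1 < ν + k ∧ j' (k - 1) < j' k)),
      if_neg (by tauto : ¬(1 < k ∧ j' (k - 1) < j' k))]
    ring

lemma objTerm_nu_one {n ν i : ℕ} {j j' : ℕ → ℕ} {ω : Ω}
    (hν1 : 1 ≤ ν) (hνm : ν < L - n)
    (hji : ∀ p, p ≤ ν → j p = i)
    (hjt : ∀ p, 1 ≤ p → p ≤ L - n - ν → j (p + ν) = j' p)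
    (hj'0 : j' 0 = ρ i ω)
    (hlt : i < j (ν + 1)) :
    objTerm T L μ ℱ U V ρ M A n (ν + 1) j ω =
      (∏ l ∈ Finset.Icc 1 ν, V (l + n) i ω) *
        (objTerm T L μ ℱ U V ρ M A (n + ν) 1 j' ω
          + (A (L - n - ν) (ρ i ω) ω - (μ[(fun ω' => A (L - n - ν) (ρ i ω') ω')|ℱ i]) ω
             - (M (L - n - ν) (ρ i ω) ω - M (L - n - ν) i ω))) := by
  unfold objTerm
  have e1 : j (ν + 1) = j' 1 := by
    rw [show ν + 1 = 1 + ν from by omega]; exact hjt 1 le_rfl (by omega)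
  have e0 : j (ν + 1 - 1) = i := by simpa using hji ν le_rfl
  have e0' : j' (1 - 1) = ρ i ω := by simpa using hj'0
  have eM : L - n - (ν + 1) + 1 = L - n - ν := by omega
  have eM' : L - (n + ν) - 1 + 1 = L - n - ν := by omega
  have eA : L - (ν + 1) - n + 1 = L - n - ν := by omega
  have eU : n + (ν + 1) = n + ν + 1 := by omega
  have eprod : (∏ l ∈ Finset.Ico 1 (ν + 1), V (l + n) (j l) ω) =
      ∏ l ∈ Finset.Icc 1 ν, V (l + n) i ω := by
    rw [Finset.Ico_add_one_right_eq_Icc]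
    exact Finset.prod_congr rfl fun l hl => by
      simp only [Finset.mem_Icc] at hl; rw [hji l hl.2]
  rw [if_pos (⟨by omega, by rw [e0]; exact hlt⟩ : 1 < ν + 1 ∧ j (ν + 1 - 1) < j (ν + 1)),
    if_neg (by simp : ¬(1 < 1 ∧ j' (1 - 1) < j' 1)),
    eprod, e0, e1, eM, eM', eA, eU, e0']
  simp only [Finset.Ico_self, Finset.prod_empty, one_mul]
  ring

lemma thetaObj_split {n ν i : ℕ} {j j' : ℕ → ℕ} {ω : Ω}
    (hν1 : 1 ≤ ν) (hνm : ν ≤ L - n)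
    (hji : ∀ p, p ≤ ν → j p = i)
    (hjt : ∀ p, 1 ≤ p → p ≤ L - n - ν → j (p + ν) = j' p)
    (hj'0 : j' 0 = ρ i ω)
    (hlt : ν < L - n → i < j (ν + 1))
    (hM0 : M 0 = 0) (hA0 : A 0 = 0) :
    thetaObj T L μ ℱ U V ρ M A n j ω =
      (∑ k ∈ Finset.Icc 1 ν, (∏ l ∈ Finset.Ico 1 k, V (l + n) i ω) * U (n + k) i ω)
        + (∏ l ∈ Finset.Icc 1 ν, V (l + n) i ω) *
            (thetaObj T L μ ℱ U V ρ M A (n + ν) j' ω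
              - (M (L - n - ν) (ρ i ω) ω - M (L - n - ν) i ω)
              + A (L - n - ν) (ρ i ω) ω
              - (μ[(fun ω' => A (L - n - ν) (ρ i ω') ω')|ℱ i]) ω) := by
  rw [thetaObj_eq_sum, ← Finset.Ico_add_one_right_eq_Icc,
    ← Finset.sum_Ico_consecutive _ (by omega : 1 ≤ ν + 1) (by omega : ν + 1 ≤ L - n + 1)]
  have hhead : ∑ k ∈ Finset.Ico 1 (ν + 1), objTerm T L μ ℱ U V ρ M A n k j ω =
      ∑ k ∈ Finset.Icc 1 ν, (∏ l ∈ Finset.Ico 1 k, V (l + n) i ω) * U (n + k) i ω := by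
    rw [Finset.Ico_add_one_right_eq_Icc]
    refine Finset.sum_congr rfl fun k hk => ?_
    simp only [Finset.mem_Icc] at hk
    rw [objTerm_stay hk.1 (by rw [hji k hk.2, hji (k - 1) (by omega)]),
      hji k hk.2,
      show (∏ l ∈ Finset.Ico 1 k, V (l + n) (j l) ω) = ∏ l ∈ Finset.Ico 1 k, V (l + n) i ω from
        Finset.prod_congr rfl fun l hl => by
          simp only [Finset.mem_Ico] at hl; rw [hji l (by omega)]]
  rw [hhead]
  rcases Nat.eq_or_lt_of_le hνm with hcase | hcase
  · have hIco : Finset.Ico (ν + 1) (L - n + 1) = ∅ := Finset.Ico_eq_empty (by omega)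
    have hobj' : thetaObj T L μ ℱ U V ρ M A (n + ν) j' ω = 0 := by
      rw [thetaObj_eq_sum, show L - (n + ν) = 0 from by omega,
        Finset.Icc_eq_empty (by omega), Finset.sum_empty]
    have h0 : L - n - ν = 0 := by omega
    rw [hIco, Finset.sum_empty, hobj', h0]
    have hcond : (fun ω' => A 0 (ρ i ω') ω') = (0 : Ω → ℝ) := by
      funext ω'; rw [hA0]; rfl
    rw [hcond, condExp_zero, hM0, hA0]
    simp
  · have hmap : Finset.Ico (ν + 1) (L - n + 1)
        = (Finset.Ico 1 (L - n - ν + 1)).map (addLeftEmbedding ν) := by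
      rw [Finset.map_add_left_Ico]; congr 1 <;> omega
    rw [hmap, Finset.sum_map]
    simp only [addLeftEmbedding_apply]
    rw [Finset.Ico_add_one_right_eq_Icc]
    have hterm : ∀ k ∈ Finset.Icc 1 (L - n - ν),
        objTerm T L μ ℱ U V ρ M A n (ν + k) j ω =
          (∏ l ∈ Finset.Icc 1 ν, V (l + n) i ω) * objTerm T L μ ℱ U V ρ M A (n + ν) k j' ω
            + (if k = 1 then (∏ l ∈ Finset.Icc 1 ν, V (l + n) i ω) *
                (A (L - n - ν) (ρ i ω) ω - (μ[(fun ω' => A (L - n - ν) (ρ i ω') ω')|ℱ i]) ω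
                  - (M (L - n - ν) (ρ i ω) ω - M (L - n - ν) i ω)) else 0) := by
      intro k hk
      simp only [Finset.mem_Icc] at hk
      rcases Nat.eq_or_lt_of_le hk.1 with h1 | h1
      · subst h1
        rw [if_pos rfl, objTerm_nu_one hν1 hcase hji hjt hj'0 (hlt hcase)]
        ring
      · rw [if_neg (by omega), add_zero]
        exact objTerm_shift hν1 (by omega) hk.2 hji hjt
    rw [Finset.sum_congr rfl hterm, Finset.sum_add_distrib, ← Finset.mul_sum,
      Finset.sum_ite_eq' (Finset.Icc 1 (L - n - ν)) 1,
      if_pos (Finset.mem_Icc.mpr ⟨le_rfl, by omega⟩)]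
    rw [show L - n - ν = L - (n + ν) from by omega] at *
    rw [← thetaObj_eq_sum]
    ring

end RecAux3
section RecAux4

variable {T L : ℕ} {μ : Measure Ω} {ℱ : Filtration ℕ m0}
  {U V : ℕ → ℕ → Ω → ℝ} {v ρ : ℕ → Ω → ℕ} {M A : ℕ → ℕ → Ω → ℝ}

lemma ECount_congr {a l : ℕ} {j j' : ℕ → ℕ} (h : ∀ r, a ≤ r → r ≤ l → j r = j' r)
    (hal : a ≤ l) : ECount a l j = ECount a l j' := by
  unfold ECount
  congr 1
  apply Finset.filter_congr
  intro r hr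
  simp only [Finset.mem_Icc] at hr
  simp [h r hr.1 hr.2, h l hal le_rfl]

lemma ECount_all {l : ℕ} {j : ℕ → ℕ} (h : ∀ r, 1 ≤ r → r ≤ l → j r = j l) :
    ECount 1 l j = l := by
  unfold ECount
  rw [Finset.filter_true_of_mem, Nat.card_Icc]
  · omega
  · intro r hr; simp only [Finset.mem_Icc] at hr; exact h r hr.1 hr.2

lemma ECount_shift {ν l i : ℕ} {j j' : ℕ → ℕ} (hl : 1 ≤ l)
    (hji : ∀ p, p ≤ ν → j p = i)
    (hjt : ∀ p, 1 ≤ p → p ≤ l → j (p + ν) = j' p)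
    (hc : j (l + ν) ≠ i) :
    ECount 1 (l + ν) j = ECount 1 l j' := by
  unfold ECount
  have hstep : (Finset.Icc 1 (l + ν)).filter (fun r => j r = j (l + ν))
      = (Finset.Icc (ν + 1) (l + ν)).filter (fun r => j r = j (l + ν)) := by
    ext r
    simp only [Finset.mem_filter, Finset.mem_Icc]
    constructor
    · rintro ⟨⟨h1, h2⟩, h3⟩
      refine ⟨⟨?_, h2⟩, h3⟩
      by_contra hcon
      have : j r = i := hji r (by omega)
      rw [this] at h3
      exact hc h3.symm
    · rintro ⟨⟨h1, h2⟩, h3⟩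
      exact ⟨⟨by omega, h2⟩, h3⟩
  rw [hstep, show Finset.Icc (ν + 1) (l + ν) = (Finset.Icc 1 l).map (addLeftEmbedding ν) from by
      rw [Finset.map_add_left_Icc]; congr 1 <;> omega,
    Finset.filter_map, Finset.card_map]
  congr 1
  apply Finset.filter_congr
  intro r hr
  simp only [Finset.mem_Icc] at hr
  simp only [Function.comp_apply, addLeftEmbedding_apply]
  rw [show ν + r = r + ν from by omega, hjt r hr.1 hr.2, hjt l hl le_rfl]

lemma thetaSet_of_le {n i : ℕ} {ω : Ω} (hn : L ≤ n) (hi : i ≤ T + 1) :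
    thetaSet T L μ ℱ U V v ρ M A n i ω = {0} := by
  have hm : L - n = 0 := by omega
  ext x
  simp only [thetaSet, Set.mem_setOf_eq, Set.mem_singleton_iff]
  constructor
  · rintro ⟨j, -, -, rfl⟩
    rw [thetaObj_eq_sum, hm, Finset.Icc_eq_empty (by omega), Finset.sum_empty]
  · rintro rfl
    refine ⟨fun p => if p = 0 then i else 0, ⟨by simp, ?_, ?_, ?_⟩, ⟨?_, ?_⟩, ?_⟩
    · intro p hp; rw [hm] at hp; exact absurd hp (by omega)
    · rw [hm]; simpa using hi
    · intro p hp
      show (if p = 0 then i else 0) = 0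
      rw [if_neg (by omega)]
    · intro l h1 h2; rw [hm] at h2; exact absurd h2 (by omega)
    · intro l h1 h2; rw [hm] at h2; exact absurd h2 (by omega)
    · rw [thetaObj_eq_sum, hm, Finset.Icc_eq_empty (by omega), Finset.sum_empty]

lemma theta_of_le {n i : ℕ} (hn : L ≤ n) (hi : i ≤ T + 1) (ω : Ω) :
    theta T L μ ℱ U V v ρ M A n i ω = 0 := by
  rw [theta_eq_sSup, thetaSet_of_le hn hi, csSup_singleton]

lemma thetaObj_top {n : ℕ} {j : ℕ → ℕ} {ω : Ω} (h : ∀ p, p ≤ L - n → j p = T + 1) :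
    thetaObj T L μ ℱ U V ρ M A n j ω =
      ∑ k ∈ Finset.Icc 1 (L - n),
        (∏ l ∈ Finset.Ico 1 k, V (l + n) (T + 1) ω) * U (n + k) (T + 1) ω := by
  rw [thetaObj_eq_sum]
  refine Finset.sum_congr rfl fun k hk => ?_
  simp only [Finset.mem_Icc] at hk
  rw [objTerm_stay hk.1 (by rw [h k hk.2, h (k - 1) (by omega)]), h k hk.2,
    show (∏ l ∈ Finset.Ico 1 k, V (l + n) (j l) ω) = ∏ l ∈ Finset.Ico 1 k, V (l + n) (T + 1) ω from
      Finset.prod_congr rfl fun l hl => by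
        simp only [Finset.mem_Ico] at hl; rw [h l (by omega)]]

lemma theta_top {n : ℕ} {ω : Ω} (hv : v (T + 1) ω = L) :
    theta T L μ ℱ U V v ρ M A n (T + 1) ω =
      ∑ k ∈ Finset.Icc 1 (L - n),
        (∏ l ∈ Finset.Ico 1 k, V (l + n) (T + 1) ω) * U (n + k) (T + 1) ω := by
  rw [theta_eq_sSup]
  have hset : thetaSet T L μ ℱ U V v ρ M A n (T + 1) ω = {∑ k ∈ Finset.Icc 1 (L - n),
      (∏ l ∈ Finset.Ico 1 k, V (l + n) (T + 1) ω) * U (n + k) (T + 1) ω} := by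
    ext x
    simp only [thetaSet, Set.mem_setOf_eq, Set.mem_singleton_iff]
    constructor
    · rintro ⟨j, hpc, -, rfl⟩
      exact thetaObj_top fun p hp => le_antisymm (prefChain_le hpc p hp)
        (hpc.1 ▸ prefChain_mono hpc 0 p (by omega) hp)
    · rintro rfl
      obtain ⟨j, h1, h2, h0, htop⟩ :=
        exists_top_chain n (le_refl (T + 1)) hv
      refine ⟨j, h1, h2, (thetaObj_top fun p hp => ?_).symm⟩
      rcases Nat.eq_zero_or_pos p with rfl | hppos
      · exact h0
      · exact htop p hppos hp
  rw [hset, csSup_singleton]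

end RecAux4
section RecAux5

variable {T L : ℕ} {μ : Measure Ω} {ℱ : Filtration ℕ m0}
  {U V : ℕ → ℕ → Ω → ℝ} {v ρ : ℕ → Ω → ℕ} {M A : ℕ → ℕ → Ω → ℝ}

lemma thetaSet_rec {n i : ℕ} {ω : Ω}
    (hi : i ≤ T + 1) (hn : n < L)
    (hρ1 : i + 1 ≤ ρ i ω) (hρ2 : ρ i ω ≤ T + 1)
    (hM0 : M 0 = 0) (hA0 : A 0 = 0) :
    thetaSet T L μ ℱ U V v ρ M A n i ω =
      ((fun y => y - (M (L - n) (i + 1) ω - M (L - n) i ω)) ''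
          thetaSet T L μ ℱ U V v ρ M A n (i + 1) ω) ∪
        ⋃ ν ∈ Set.Icc 1 (min (v i ω) (L - n)),
          (fun y => (∑ k ∈ Finset.Icc 1 ν,
                (∏ l ∈ Finset.Ico 1 k, V (l + n) i ω) * U (n + k) i ω)
            + (∏ l ∈ Finset.Icc 1 ν, V (l + n) i ω) *
                (y - (M (L - n - ν) (ρ i ω) ω - M (L - n - ν) i ω)
                  + A (L - n - ν) (ρ i ω) ω
                  - (μ[(fun ω' => A (L - n - ν) (ρ i ω') ω')|ℱ i]) ω)) ''
            thetaSet T L μ ℱ U V v ρ M A (n + ν) (ρ i ω) ω := by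
  have hm1 : 1 ≤ L - n := by omega
  ext x
  simp only [Set.mem_union, Set.mem_iUnion₂, Set.mem_image, Set.mem_Icc]
  constructor
  · rintro ⟨j, hpc, hsc, rfl⟩
    have hmono := prefChain_mono hpc
    have hj0 : j 0 = i := hpc.1
    by_cases hj1 : j 1 = i
    · -- exercise branch
      right
      set ν := Nat.findGreatest (fun k => j k = i) (L - n) with hν
      have hν1 : 1 ≤ ν := Nat.le_findGreatest hm1 hj1
      have hνm : ν ≤ L - n := Nat.findGreatest_le _
      have hjν : j ν = i := Nat.findGreatest_spec (P := fun k => j k = i) hm1 hj1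
      have hji : ∀ p, p ≤ ν → j p = i := fun p hp =>
        le_antisymm (hjν ▸ hmono p ν hp hνm) (hj0 ▸ hmono 0 p (by omega) (by omega))
      have hgt : ∀ k, ν < k → k ≤ L - n → i < j k := fun k h1 h2 =>
        lt_of_le_of_ne (hj0 ▸ hmono 0 k (by omega) h2)
          (fun he => Nat.findGreatest_is_greatest h1 h2 he.symm)
      have hνv : ν ≤ v i ω := by
        have h := hsc.1 ν hν1 hνm
        rwa [hjν, ECount_all (fun r h1 h2 => by rw [hji r h2, hjν])] at h
      set j' : ℕ → ℕ := fun p => if p = 0 then ρ i ω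
        else if p ≤ L - n - ν then j (p + ν) else 0 with hj'
      have hjt : ∀ p, 1 ≤ p → p ≤ L - n - ν → j (p + ν) = j' p := fun p h1 h2 => by
        simp only [hj']; rw [if_neg (by omega), if_pos h2]
      have hj'0 : j' 0 = ρ i ω := by simp [hj']
      have hjump : ν < L - n → ρ i ω ≤ j (ν + 1) := fun h => by
        have h2 := hsc.2 (ν + 1) (by omega) (by omega)
          (by rw [Nat.add_sub_cancel, hjν]; exact hgt (ν + 1) (by omega) (by omega))
        rwa [Nat.add_sub_cancel, hjν] at h2
      have hLν : L - (n + ν) = L - n - ν := by omega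
      have hpc' : PrefChain (ρ i ω) (L - (n + ν)) (T + 1) j' := by
        rw [hLν]
        refine ⟨hj'0, fun p hp => ?_, ?_, fun p hp => ?_⟩
        · rcases Nat.eq_zero_or_pos p with rfl | hppos
          · rw [hj'0, ← hjt 1 le_rfl (by omega), show 1 + ν = ν + 1 from by omega]
            exact hjump (by omega)
          · rw [← hjt p hppos (by omega), ← hjt (p + 1) (by omega) (by omega)]
            exact hmono (p + ν) (p + 1 + ν) (by omega) (by omega)
        · rcases Nat.eq_zero_or_pos (L - n - ν) with h0 | hpos
          · rw [h0]; rw [hj'0] at *; exact hρ2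
          · rw [← hjt (L - n - ν) hpos le_rfl]
            exact prefChain_le hpc (L - n - ν + ν) (by omega)
        · simp only [hj']; rw [if_neg (by omega), if_neg (by omega)]
      have hsc' : SatCons v ρ 1 (L - (n + ν)) j' ω := by
        rw [hLν]
        constructor
        · intro l hl1 hl2
          have hec : ECount 1 (l + ν) j = ECount 1 l j' :=
            ECount_shift hl1 hji (fun p h1 h2 => hjt p h1 (by omega))
              (hgt (l + ν) (by omega) (by omega)).ne'
          have h := hsc.1 (l + ν) (by omega) (by omega)
          rwa [hec, hjt l hl1 hl2] at h
        · intro l hl1 hl2 hlt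
          have e1 : j' (l - 1) = j (l - 1 + ν) := (hjt (l - 1) (by omega) (by omega)).symm
          have e2 : j' l = j (l + ν) := (hjt l (by omega) hl2).symm
          have h := hsc.2 (l + ν) (by omega) (by omega)
            (by rw [show l + ν - 1 = l - 1 + ν from by omega, ← e1, ← e2]; exact hlt)
          rwa [show l + ν - 1 = l - 1 + ν from by omega, ← e1, ← e2] at h
      refine ⟨ν, ⟨hν1, le_min hνv hνm⟩, thetaObj T L μ ℱ U V ρ M A (n + ν) j' ω,
        ⟨j', hpc', hsc', rfl⟩, ?_⟩
      exact (thetaObj_split (T := T) (μ := μ) (ℱ := ℱ) (U := U) (V := V) hν1 hνm hji hjt hj'0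
        (fun h => hgt (ν + 1) (by omega) (by omega)) hM0 hA0).symm
    · -- move-on branch
      left
      have hlt1 : i + 1 ≤ j 1 := by
        have := hj0 ▸ hmono 0 1 (by omega) hm1
        omega
      set jj : ℕ → ℕ := fun p => if p = 0 then i + 1 else j p with hjj
      have hag : ∀ p, 1 ≤ p → j p = jj p := fun p hp => by
        simp only [hjj]; rw [if_neg (by omega)]
      have hpc' : PrefChain (i + 1) (L - n) (T + 1) jj := by
        refine ⟨by simp [hjj], fun p hp => ?_, ?_, fun p hp => ?_⟩
        · rcases Nat.eq_zero_or_pos p with rfl | hppos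
          · rw [← hag 1 le_rfl]; simpa [hjj] using hlt1
          · rw [← hag p hppos, ← hag (p + 1) (by omega)]
            exact hpc.2.1 p hp
        · rw [← hag (L - n) hm1]; exact hpc.2.2.1
        · rw [← hag p (by omega)]; exact hpc.2.2.2 p hp
      have hsc' : SatCons v ρ 1 (L - n) jj ω := by
        constructor
        · intro l hl1 hl2
          rw [← ECount_congr (fun r h1 h2 => hag r h1) hl1, ← hag l hl1]
          exact hsc.1 l hl1 hl2
        · intro l hl1 hl2 hlt
          rw [← hag (l - 1) (by omega), ← hag l (by omega)] at hlt ⊢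
          exact hsc.2 l hl1 hl2 hlt
      refine ⟨thetaObj T L μ ℱ U V ρ M A n jj ω, ⟨jj, hpc', hsc', rfl⟩, ?_⟩
      have hcs := thetaObj_congr_start (T := T) (μ := μ) (ℱ := ℱ) (U := U) (V := V) (ρ := ρ) (M := M) (A := A) (ω := ω) hag hm1
      rw [hcs, hj0, show jj 0 = i + 1 from by simp [hjj]]
      ring
  · rintro (⟨y, ⟨jj, hpc, hsc, rfl⟩, rfl⟩ | ⟨ν, ⟨hν1, hνK⟩, y, ⟨j', hpc', hsc', rfl⟩, rfl⟩)
    · -- from the move-on branch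
      have hj0 : jj 0 = i + 1 := hpc.1
      have hlt1 : i + 1 ≤ jj 1 := hj0 ▸ prefChain_mono hpc 0 1 (by omega) hm1
      set j : ℕ → ℕ := fun p => if p = 0 then i else jj p with hjdef
      have hag : ∀ p, 1 ≤ p → j p = jj p := fun p hp => by
        simp only [hjdef]; rw [if_neg (by omega)]
      have hpc2 : PrefChain i (L - n) (T + 1) j := by
        refine ⟨by simp [hjdef], fun p hp => ?_, ?_, fun p hp => ?_⟩
        · rcases Nat.eq_zero_or_pos p with rfl | hppos
          · rw [hag 1 le_rfl]; simp only [hjdef]; simp; omega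
          · rw [hag p hppos, hag (p + 1) (by omega)]
            exact hpc.2.1 p hp
        · rw [hag (L - n) hm1]; exact hpc.2.2.1
        · rw [hag p (by omega)]; exact hpc.2.2.2 p hp
      have hsc2 : SatCons v ρ 1 (L - n) j ω := by
        constructor
        · intro l hl1 hl2
          rw [ECount_congr (fun r h1 h2 => hag r h1) hl1, hag l hl1]
          exact hsc.1 l hl1 hl2
        · intro l hl1 hl2 hlt
          rw [hag (l - 1) (by omega), hag l (by omega)] at hlt ⊢
          exact hsc.2 l hl1 hl2 hlt
      refine ⟨j, hpc2, hsc2, ?_⟩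
      have hcs := thetaObj_congr_start (T := T) (μ := μ) (ℱ := ℱ) (U := U) (V := V) (ρ := ρ) (M := M) (A := A) (ω := ω)
        (fun p hp => (hag p hp).symm) hm1
      rw [hcs, hj0, show j 0 = i from by simp [hjdef]]
      ring
    · -- from the exercise branch
      have hνv : ν ≤ v i ω := le_trans hνK (min_le_left _ _)
      have hνm : ν ≤ L - n := le_trans hνK (min_le_right _ _)
      have hLν : L - (n + ν) = L - n - ν := by omega
      have hj'0 : j' 0 = ρ i ω := hpc'.1
      have hmono' := prefChain_mono hpc'
      set j : ℕ → ℕ := fun k => if k ≤ ν then i else if k ≤ L - n then j' (k - ν) else 0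
        with hjdef
      have hji : ∀ p, p ≤ ν → j p = i := fun p hp => by
        simp only [hjdef]; rw [if_pos hp]
      have hjt : ∀ p, 1 ≤ p → p ≤ L - n - ν → j (p + ν) = j' p := fun p h1 h2 => by
        simp only [hjdef]; rw [if_neg (by omega), if_pos (by omega), Nat.add_sub_cancel]
      have hgt : ∀ k, ν < k → k ≤ L - n → i < j k := by
        intro k h1 h2
        have e : j k = j' (k - ν) := by
          simp only [hjdef]; rw [if_neg (by omega), if_pos h2]
        have : ρ i ω ≤ j' (k - ν) := hj'0 ▸ hmono' 0 (k - ν) (by omega) (by omega)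
        omega
      have hpc2 : PrefChain i (L - n) (T + 1) j := by
        refine ⟨hji 0 (by omega), fun p hp => ?_, ?_, fun p hp => ?_⟩
        · rcases le_or_gt (p + 1) ν with hcase | hcase
          · rw [hji p (by omega), hji (p + 1) hcase]
          · rcases le_or_gt p ν with hcase2 | hcase2
            · rw [hji p hcase2]
              exact le_of_lt (hgt (p + 1) hcase (by omega))
            · rw [show j p = j' (p - ν) from by
                  simp only [hjdef]; rw [if_neg (by omega), if_pos (by omega)],
                show j (p + 1) = j' (p + 1 - ν) from by
                  simp only [hjdef]; rw [if_neg (by omega), if_pos (by omega)],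
                show p + 1 - ν = p - ν + 1 from by omega]
              exact hpc'.2.1 (p - ν) (by omega)
        · rcases Nat.eq_or_lt_of_le hνm with hcase | hcase
          · rw [hji (L - n) (by omega)]; exact hi
          · rw [show j (L - n) = j' (L - n - ν) from by
                simp only [hjdef]; rw [if_neg (by omega), if_pos le_rfl]]
            exact hLν ▸ prefChain_le hpc' (L - n - ν) (by omega)
        · simp only [hjdef]; rw [if_neg (by omega), if_neg (by omega)]
      have hsc2 : SatCons v ρ 1 (L - n) j ω := by
        constructor
        · intro l hl1 hl2
          rcases le_or_gt l ν with hcase | hcase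
          · have : ECount 1 l j = l :=
              ECount_all (fun r h1 h2 => by rw [hji r (by omega), hji l hcase])
            rw [this, hji l hcase]
            omega
          · have hec : ECount 1 l j = ECount 1 (l - ν) j' := by
              have := ECount_shift (by omega : 1 ≤ l - ν) hji
                (fun p h1 h2 => hjt p h1 (by omega))
                (by rw [show l - ν + ν = l from by omega]; exact (hgt l hcase hl2).ne')
              rwa [show l - ν + ν = l from by omega] at this
            have h := hsc'.1 (l - ν) (by omega) (by omega)
            have e : j (l - ν + ν) = j' (l - ν) := hjt (l - ν) (by omega) (by omega)
            rw [show l - ν + ν = l from by omega] at e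
            rw [hec, e]
            exact h
        · intro l hl1 hl2 hlt
          rcases le_or_gt l ν with hcase | hcase
          · rw [hji (l - 1) (by omega), hji l hcase] at hlt
            omega
          · rcases Nat.eq_or_lt_of_le hcase with hcase2 | hcase2
            · -- l = ν + 1
              have e1 : j (l - 1) = i := hji (l - 1) (by omega)
              have e2 : j l = j' 1 := by
                have e := hjt 1 le_rfl (by omega)
                rwa [show 1 + ν = l from by omega] at e
              rw [e1, e2]
              exact hj'0 ▸ hmono' 0 1 (by omega) (by omega)
            · -- l > ν + 1
              have e1 : j (l - 1) = j' (l - 1 - ν) := by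
                have e := hjt (l - 1 - ν) (by omega) (by omega)
                rwa [show l - 1 - ν + ν = l - 1 from by omega] at e
              have e2 : j l = j' (l - ν) := by
                have e := hjt (l - ν) (by omega) (by omega)
                rwa [show l - ν + ν = l from by omega] at e
              rw [e1, e2] at hlt ⊢
              have h := hsc'.2 (l - ν) (by omega) (by omega)
                (by rw [show l - ν - 1 = l - 1 - ν from by omega]; exact hlt)
              rwa [show l - ν - 1 = l - 1 - ν from by omega] at h
      refine ⟨j, hpc2, hsc2, ?_⟩
      exact (thetaObj_split (T := T) (μ := μ) (ℱ := ℱ) (U := U) (V := V) hν1 hνm hji hjt hj'0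
        (fun h => hgt (ν + 1) (by omega) (by omega)) hM0 hA0).symm

end RecAux5
section RecAux6

variable {T L : ℕ} {μ : Measure Ω} {ℱ : Filtration ℕ m0}
  {U V : ℕ → ℕ → Ω → ℝ} {v ρ : ℕ → Ω → ℕ} {M A : ℕ → ℕ → Ω → ℝ}

lemma sSup_branch2_empty {c : ℕ} (hc : c = 0) (f : ℕ → ℝ) :
    sSup {x : ℝ | ∃ ν, 1 ≤ ν ∧ ν ≤ c ∧ x = f ν} = 0 := by
  rw [show {x : ℝ | ∃ ν, 1 ≤ ν ∧ ν ≤ c ∧ x = f ν} = ∅ from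
    Set.eq_empty_iff_forall_notMem.mpr (by rintro x ⟨ν, h1, h2, -⟩; omega),
    Real.sSup_empty]

end RecAux6
/-- **Recursion for the pathwise dual maximum.** For every tuple of martingales
`M = (M 1, ..., M L)` (with the convention `M 0 = 0`), every tuple of integrable adapted
processes `A = (A 1, ..., A L)` (with `A 0 = 0`), every `i ≤ T` and every `n ≤ L`, almost
surely
`θ_i^{n,L} = max( θ_{i+1}^{n,L} - (M^{L-n}_{i+1} - M^{L-n}_i),
  max over 1 ≤ ν ≤ v i ∧ (L-n) of ( ∑_{k=1}^{ν} (∏_{l=1}^{k-1} V^{l+n}_i) U^{n+k}_i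
    + (∏_{λ=1}^{ν} V^{λ+n}_i) ( θ_{ρ i}^{n+ν,L} - (M^{L-n-ν}_{ρ i} - M^{L-n-ν}_i)
        + A^{L-n-ν}_{ρ i} - E[A^{L-n-ν}_{ρ i} | ℱ i] ) ) )`,
with the terminal condition
`θ_{T+1}^{n,L} = ∑_{k=1}^{L-n} (∏_{l=1}^{k-1} V^{l+n}_{T+1}) U^{n+k}_{T+1}`. -/
theorem recursion_pathwise_dual_maximum
    (T L : ℕ) (μ : Measure Ω) [IsProbabilityMeasure μ] (ℱ : Filtration ℕ m0)
    (U V : ℕ → ℕ → Ω → ℝ) (v ρ : ℕ → Ω → ℕ)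
    (hL : 1 ≤ L)
    (hU : ∀ p i, 1 ≤ p → p ≤ L → i ≤ T + 1 →
      StronglyMeasurable[ℱ i] (U p i) ∧ Integrable (U p i) μ)
    (hV : ∀ l i, 1 ≤ l → l ≤ L - 1 → i ≤ T + 1 →
      StronglyMeasurable[ℱ i] (V l i) ∧ (∀ ω, 0 < V l i ω) ∧ ∃ c : ℝ, ∀ ω, V l i ω ≤ c)
    (hvad : ∀ i, i ≤ T + 1 → Measurable[ℱ i] (v i))
    (hvb : ∀ i ω, i ≤ T + 1 → 1 ≤ v i ω ∧ v i ω ≤ L)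
    (hvT : ∀ ω, v (T + 1) ω = L)
    (hρ : ∀ i, i ≤ T → IsStoppingTime ℱ (fun ω => ((ρ i ω : ℕ) : WithTop ℕ)) ∧ ∀ ω, i + 1 ≤ ρ i ω ∧ ρ i ω ≤ T + 1)
    (M A : ℕ → ℕ → Ω → ℝ)
    (hM : ∀ m, 1 ≤ m → m ≤ L → IsMartingaleFrom μ ℱ 0 (M m))
    (hM0 : M 0 = 0)
    (hA : ∀ m r, 1 ≤ m → m ≤ L → r ≤ T + 1 →
      StronglyMeasurable[ℱ r] (A m r) ∧ Integrable (A m r) μ)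
    (hA0 : A 0 = 0)
    (n i : ℕ) (hn : n ≤ L) (hi : i ≤ T) :
    (∀ᵐ ω ∂μ, theta T L μ ℱ U V v ρ M A n i ω =
      max (theta T L μ ℱ U V v ρ M A n (i + 1) ω - (M (L - n) (i + 1) ω - M (L - n) i ω))
        (sSup { x : ℝ | ∃ ν, 1 ≤ ν ∧ ν ≤ min (v i ω) (L - n) ∧
          x = (∑ k ∈ Finset.Icc 1 ν,
                (∏ l ∈ Finset.Ico 1 k, V (l + n) i ω) * U (n + k) i ω)
            + (∏ l ∈ Finset.Icc 1 ν, V (l + n) i ω) *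
                (theta T L μ ℱ U V v ρ M A (n + ν) (ρ i ω) ω
                  - (M (L - n - ν) (ρ i ω) ω - M (L - n - ν) i ω)
                  + A (L - n - ν) (ρ i ω) ω
                  - (μ[(fun ω' => A (L - n - ν) (ρ i ω') ω')|ℱ i]) ω) })) ∧
    (∀ᵐ ω ∂μ, theta T L μ ℱ U V v ρ M A n (T + 1) ω =
      ∑ k ∈ Finset.Icc 1 (L - n),
        (∏ l ∈ Finset.Ico 1 k, V (l + n) (T + 1) ω) * U (n + k) (T + 1) ω) := by
  constructor
  · -- the recursion
    refine Filter.Eventually.of_forall fun ω => ?_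
    rcases Nat.lt_or_ge n L with hnL | hnL
    · -- main case: n < L
      have hiT : i ≤ T + 1 := by omega
      have hρ1 : i + 1 ≤ ρ i ω := ((hρ i hi).2 ω).1
      have hρ2 : ρ i ω ≤ T + 1 := ((hρ i hi).2 ω).2
      have hv1 : 1 ≤ v i ω := (hvb i ω (by omega)).1
      have hK1 : 1 ≤ min (v i ω) (L - n) := le_min hv1 (by omega)
      set g : ℕ → ℝ → ℝ := fun ν y =>
        (∑ k ∈ Finset.Icc 1 ν, (∏ l ∈ Finset.Ico 1 k, V (l + n) i ω) * U (n + k) i ω)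
          + (∏ l ∈ Finset.Icc 1 ν, V (l + n) i ω) *
              (y - (M (L - n - ν) (ρ i ω) ω - M (L - n - ν) i ω)
                + A (L - n - ν) (ρ i ω) ω
                - (μ[(fun ω' => A (L - n - ν) (ρ i ω') ω')|ℱ i]) ω) with hg
      set th : ℕ → ℝ := fun ν => theta T L μ ℱ U V v ρ M A (n + ν) (ρ i ω) ω with hth
      set Sv : ℕ → Set ℝ := fun ν => thetaSet T L μ ℱ U V v ρ M A (n + ν) (ρ i ω) ω with hSv
      set S1 : Set ℝ := thetaSet T L μ ℱ U V v ρ M A n (i + 1) ω with hS1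
      set K := min (v i ω) (L - n) with hK
      rw [theta_eq_sSup n i ω, thetaSet_rec hiT hnL hρ1 hρ2 hM0 hA0]
      show sSup (((fun y => y - (M (L - n) (i + 1) ω - M (L - n) i ω)) '' S1)
          ∪ ⋃ ν ∈ Set.Icc 1 K, g ν '' Sv ν) =
        max (theta T L μ ℱ U V v ρ M A n (i + 1) ω - (M (L - n) (i + 1) ω - M (L - n) i ω))
          (sSup {x : ℝ | ∃ ν, 1 ≤ ν ∧ ν ≤ K ∧ x = g ν (th ν)})
      have hneSv : ∀ m, (Sv m).Nonempty := fun m =>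
        thetaSet_nonempty (n + m) hρ2 (hvT ω)
      have hfinSv : ∀ m, (Sv m).Finite := fun m => thetaSet_finite (n + m) (ρ i ω) ω
      have hfin1 : S1.Finite := thetaSet_finite n (i + 1) ω
      have hne1 : S1.Nonempty := thetaSet_nonempty n (by omega) (hvT ω)
      have hfin2 : (⋃ ν ∈ Set.Icc 1 K, g ν '' Sv ν).Finite :=
        Set.Finite.biUnion (Set.finite_Icc 1 K) fun ν _ => (hfinSv ν).image _
      have hne2 : (⋃ ν ∈ Set.Icc 1 K, g ν '' Sv ν).Nonempty := by
        obtain ⟨y, hy⟩ := hneSv 1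
        exact ⟨g 1 y, Set.mem_biUnion (Set.mem_Icc.mpr ⟨le_rfl, hK1⟩)
          (Set.mem_image_of_mem _ hy)⟩
      rw [csSup_union ((hfin1.image _).bddAbove) (hne1.image _) hfin2.bddAbove hne2]
      have hths : ∀ ν, th ν = sSup (Sv ν) := fun ν => rfl
      have hgsup : ∀ ν, 1 ≤ ν → ν ≤ K → sSup (g ν '' Sv ν) = g ν (th ν) := by
        intro ν h1 h2
        rcases Nat.lt_or_ge ν (L - n) with hlt | hge
        · have hC : 0 < ∏ l ∈ Finset.Icc 1 ν, V (l + n) i ω :=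
            Finset.prod_pos fun l hl => by
              simp only [Finset.mem_Icc] at hl
              exact ((hV (l + n) i (by omega) (by omega) hiT).2.1) ω
          rw [hths]
          refine (Monotone.map_csSup_of_continuousAt ?_ ?_ (hneSv ν)
            (hfinSv ν).bddAbove).symm
          · exact Continuous.continuousAt (by simp only [hg]; fun_prop)
          · intro a b hab
            simp only [hg]
            have h := mul_le_mul_of_nonneg_left
              (show a - (M (L - n - ν) (ρ i ω) ω - M (L - n - ν) i ω)
                    + A (L - n - ν) (ρ i ω) ω
                    - (μ[(fun ω' => A (L - n - ν) (ρ i ω') ω')|ℱ i]) ω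
                  ≤ b - (M (L - n - ν) (ρ i ω) ω - M (L - n - ν) i ω)
                    + A (L - n - ν) (ρ i ω) ω
                    - (μ[(fun ω' => A (L - n - ν) (ρ i ω') ω')|ℱ i]) ω from by linarith)
              hC.le
            linarith
        · have hKm : ν = L - n := by omega
          have hsing : Sv ν = {0} := thetaSet_of_le (by omega) hρ2
          have hth0 : th ν = 0 := theta_of_le (by omega) hρ2 ω
          rw [hsing, Set.image_singleton, csSup_singleton, hth0]
      have hbdR : BddAbove {x : ℝ | ∃ ν, 1 ≤ ν ∧ ν ≤ K ∧ x = g ν (th ν)} := by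
        refine Set.Finite.bddAbove (Set.Finite.subset
          ((Set.finite_Icc 1 K).image fun ν => g ν (th ν)) ?_)
        rintro x ⟨ν, h1, h2, rfl⟩
        exact ⟨ν, Set.mem_Icc.mpr ⟨h1, h2⟩, rfl⟩
      congr 1
      · rw [show theta T L μ ℱ U V v ρ M A n (i + 1) ω = sSup S1 from rfl]
        exact (Monotone.map_csSup_of_continuousAt
          ((continuous_id.sub continuous_const).continuousAt)
          (fun a b hab => sub_le_sub_right hab _) hne1 hfin1.bddAbove).symm
      · apply le_antisymm
        · refine csSup_le hne2 fun x hx => ?_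
          obtain ⟨ν, hν, hxmem⟩ := Set.mem_iUnion₂.mp hx
          obtain ⟨h1, h2⟩ := Set.mem_Icc.mp hν
          calc x ≤ sSup (g ν '' Sv ν) := le_csSup ((hfinSv ν).image _).bddAbove hxmem
            _ = g ν (th ν) := hgsup ν h1 h2
            _ ≤ _ := le_csSup hbdR ⟨ν, h1, h2, rfl⟩
        · refine csSup_le ⟨g 1 (th 1), 1, le_rfl, hK1, rfl⟩ ?_
          rintro x ⟨ν, h1, h2, rfl⟩
          rw [← hgsup ν h1 h2]
          exact csSup_le_csSup hfin2.bddAbove ((hneSv ν).image _)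
            (Set.subset_biUnion_of_mem (u := fun ν => g ν '' Sv ν) (Set.mem_Icc.mpr ⟨h1, h2⟩))
    · -- degenerate case: n = L
      have h0 : L - n = 0 := by omega
      rw [theta_of_le (by omega) (by omega) ω, theta_of_le (by omega) (by omega) ω,
        sSup_branch2_empty (by omega) _, h0, hM0]
      simp
  · -- terminal condition
    exact Filter.Eventually.of_forall fun ω => theta_top (hvT ω)
end
end

section
/- Supermartingale and domination property of the parameterized Snell envelopes: for every 1 ≤ k ≤ L and every chain j_1 ≤ … ≤ j_{k−1}, the process (Y*_r^{L−k+1, j_1,…,j_{k−1}})_{r ≥ j_{k−1}} is a supermartingale (i.e. E[ Y*_{r+1}^{L−k+1, j_1,…,j_{k−1}} | F_r ] ≤ Y*_r^{L−k+1, j_1,…,j_{k−1}} a.s. for all r ≥ j_{k−1}) and it dominates the virtual cashflow: Y*_r^{L−k+1, j_1,…,j_{k−1}} ≥ Y*_r^{L−k, j_1,…,j_{k−1}, r} almost surely for all r ≥ j_{k−1}. -/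
open MeasureTheory

noncomputable section

variable {Ω : Type*} [m0 : MeasurableSpace Ω]

/-- The non-decreasing chain `j 1 ≤ j 2 ≤ ... ≤ j m ≤ d`. -/
def DetChain (m d : ℕ) (j : ℕ → ℕ) : Prop :=
  (∀ p, 1 ≤ p → p < m → j p ≤ j (p + 1)) ∧ ∀ p, 1 ≤ p → p ≤ m → j p ≤ d

/-- The family of conditional payoffs whose essential supremum is the Snell envelope
`Y*_r^{L-k+1, j 1, ..., j (k-1)}` of the general multiple stopping problem. -/
def snellFamily (T L : ℕ) (μ : Measure Ω) (ℱ : Filtration ℕ m0)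
    (X : (ℕ → ℕ) → Ω → ℝ) (k r : ℕ) (j : ℕ → ℕ) : Set (Ω → ℝ) :=
  { g | ∃ τ : ℕ → Ω → ℕ,
      (∀ p, IsStoppingTime ℱ (fun ω => ((τ p ω : ℕ) : WithTop ℕ))) ∧
      (∀ ω, r ≤ τ k ω) ∧
      (∀ p, k ≤ p → p < L → ∀ ω, τ p ω ≤ τ (p + 1) ω) ∧
      (∀ ω, τ L ω ≤ T + 1) ∧
      g = μ[(fun ω => X (fun p => if p < k then j p else τ p ω) ω)|ℱ r] }

section SnellHelpers

open Filter Topology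

lemma isStoppingTime_nat_iff (ℱ : Filtration ℕ m0) (τ : Ω → ℕ) :
    IsStoppingTime ℱ (fun ω => ((τ ω : ℕ) : WithTop ℕ)) ↔
      ∀ n, MeasurableSet[ℱ n] {ω | τ ω ≤ n} := by
  simp [IsStoppingTime]

omit m0 in
lemma chain_mono_aux {τ : ℕ → Ω → ℕ} {k L : ℕ}
    (mon : ∀ p, k ≤ p → p < L → ∀ ω, τ p ω ≤ τ (p + 1) ω)
    {p q : ℕ} (hp : k ≤ p) (hpq : p ≤ q) (hq : q ≤ L) (ω : Ω) :
    τ p ω ≤ τ q ω := by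
  have H : ∀ q, p ≤ q → q ≤ L → τ p ω ≤ τ q ω := by
    intro q hpq
    induction q, hpq using Nat.le_induction with
    | base => intro _; exact le_rfl
    | succ n hn ih =>
        intro h
        exact le_trans (ih (by omega)) (mon n (by omega) (by omega) ω)
  exact H q hpq hq

/-- Extension of a finite tuple to a deterministic index chain. -/
def chainExt (L : ℕ) {T : ℕ} (u : Fin L → Fin (T + 2)) : ℕ → ℕ := fun p =>
  if h : 1 ≤ p ∧ p ≤ L then (u ⟨p - 1, by omega⟩ : ℕ) else 0

open Classical in
/-- The finite set of deterministic chains compatible with `j` before `k`. -/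
noncomputable def chainsSet (T L k : ℕ) (j : ℕ → ℕ) : Finset (Fin L → Fin (T + 2)) :=
  Finset.univ.filter fun u =>
    DetChain L (T + 1) (chainExt L u) ∧ ∀ p, 1 ≤ p → p < k → chainExt L u p = j p

lemma mem_chainsSet {T L k : ℕ} {j : ℕ → ℕ} {u : Fin L → Fin (T + 2)} :
    u ∈ chainsSet T L k j ↔
      DetChain L (T + 1) (chainExt L u) ∧ ∀ p, 1 ≤ p → p < k → chainExt L u p = j p := by
  classical
  simp [chainsSet]

lemma chainExt_val {L T : ℕ} (u : Fin L → Fin (T + 2)) (q : Fin L) :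
    chainExt L u (q.1 + 1) = (u q : ℕ) := by
  have h : 1 ≤ q.1 + 1 ∧ q.1 + 1 ≤ L := ⟨by omega, by omega⟩
  simp only [chainExt, dif_pos h]
  have h2 : (⟨q.1 + 1 - 1, by omega⟩ : Fin L) = q := Fin.ext (by simp)
  rw [h2]

/-- Bound for all virtual cashflows with fixed prefix `j`. -/
noncomputable def snellBound (T L k : ℕ) (j : ℕ → ℕ) (X : (ℕ → ℕ) → Ω → ℝ) : Ω → ℝ :=
  fun ω => ∑ u ∈ chainsSet T L k j, |X (chainExt L u) ω|

omit m0 in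
lemma payoff_decomp (T L : ℕ) (X : (ℕ → ℕ) → Ω → ℝ)
    (hXdep : ∀ j j' : ℕ → ℕ, (∀ p, 1 ≤ p → p ≤ L → j p = j' p) → X j = X j')
    {k : ℕ} (hk1 : 1 ≤ k) (hkL : k ≤ L) {j : ℕ → ℕ}
    (hj : DetChain (k - 1) (T + 1) j) {s : ℕ} (hjs : ∀ p, 1 ≤ p → p ≤ k - 1 → j p ≤ s)
    {τ : ℕ → Ω → ℕ} (hlow : ∀ ω, s ≤ τ k ω)
    (hmon : ∀ p, k ≤ p → p < L → ∀ ω, τ p ω ≤ τ (p + 1) ω)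
    (htop : ∀ ω, τ L ω ≤ T + 1) :
    (fun ω => X (fun p => if p < k then j p else τ p ω) ω) =
      fun ω => ∑ u ∈ chainsSet T L k j,
        Set.indicator {ω' | ∀ p, k ≤ p → p ≤ L → τ p ω' = chainExt L u p}
          (X (chainExt L u)) ω := by
  funext ω
  have hub : ∀ p, k ≤ p → p ≤ L → τ p ω ≤ T + 1 := fun p h1 h2 =>
    le_trans (chain_mono_aux hmon h1 h2 le_rfl ω) (htop ω)
  have hlb : ∀ p, k ≤ p → p ≤ L → s ≤ τ p ω := fun p h1 h2 =>
    le_trans (hlow ω) (chain_mono_aux hmon le_rfl h1 h2 ω)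
  have hjT : ∀ p, 1 ≤ p → p < k → j p ≤ T + 1 := fun p h1 h2 => hj.2 p h1 (by omega)
  set u0 : Fin L → Fin (T + 2) := fun q =>
    ⟨if q.1 + 1 < k then j (q.1 + 1) else τ (q.1 + 1) ω, by
      split
      · next h => exact Nat.lt_of_le_of_lt (hjT _ (by omega) h) (by omega)
      · next h =>
          exact Nat.lt_of_le_of_lt (hub (q.1 + 1) (by omega) (by omega)) (by omega)⟩ with hu0def
  have hval : ∀ p, 1 ≤ p → p ≤ L →
      chainExt L u0 p = if p < k then j p else τ p ω := by
    intro p h1 h2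
    simp only [chainExt, dif_pos (show 1 ≤ p ∧ p ≤ L from ⟨h1, h2⟩)]
    show (if (p - 1) + 1 < k then j ((p - 1) + 1) else τ ((p - 1) + 1) ω) = _
    rw [show p - 1 + 1 = p from by omega]
  have hu0 : u0 ∈ chainsSet T L k j := by
    rw [mem_chainsSet]
    refine ⟨⟨?_, ?_⟩, ?_⟩
    · intro p h1 h2
      rw [hval p h1 (by omega), hval (p + 1) (by omega) (by omega)]
      by_cases hpk : p + 1 < k
      · rw [if_pos (by omega), if_pos hpk]; exact hj.1 p h1 (by omega)
      · by_cases hpk' : p < k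
        · rw [if_pos hpk', if_neg hpk]
          exact le_trans (hjs p h1 (by omega)) (hlb (p + 1) (by omega) (by omega))
        · rw [if_neg hpk', if_neg hpk]; exact hmon p (by omega) h2 ω
    · intro p h1 h2
      rw [hval p h1 h2]
      by_cases hpk : p < k
      · rw [if_pos hpk]; exact hjT p h1 hpk
      · rw [if_neg hpk]; exact hub p (by omega) h2
    · intro p h1 h2
      rw [hval p h1 (by omega), if_pos h2]
  have hωA : ω ∈ {ω' | ∀ p, k ≤ p → p ≤ L → τ p ω' = chainExt L u0 p} := by
    intro p h1 h2
    rw [hval p (by omega) h2, if_neg (by omega)]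
  rw [Finset.sum_eq_single_of_mem u0 hu0 ?_, Set.indicator_of_mem hωA]
  · exact congrFun (hXdep _ _ (fun p h1 h2 => (hval p h1 h2).symm)) ω
  · intro u hu hne
    rw [Set.indicator_of_notMem]
    intro hmem
    apply hne
    rcases mem_chainsSet.1 hu with ⟨-, hjeq⟩
    funext q
    apply Fin.val_injective
    rw [← chainExt_val u q, ← chainExt_val u0 q]
    by_cases hqk : q.1 + 1 < k
    · rw [hjeq (q.1 + 1) (by omega) hqk, hval (q.1 + 1) (by omega) (by omega), if_pos hqk]
    · rw [← hmem (q.1 + 1) (by omega) (by omega),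
        hval (q.1 + 1) (by omega) (by omega), if_neg hqk]

lemma measurableSet_chainEvent (ℱ : Filtration ℕ m0) {τ : ℕ → Ω → ℕ}
    (hτ : ∀ p, IsStoppingTime ℱ (fun ω => ((τ p ω : ℕ) : WithTop ℕ))) (c : ℕ → ℕ) (k L : ℕ) :
    MeasurableSet {ω | ∀ p, k ≤ p → p ≤ L → τ p ω = c p} := by
  have h : {ω | ∀ p, k ≤ p → p ≤ L → τ p ω = c p} =
      ⋂ p ∈ Finset.Icc k L, {ω | τ p ω = c p} := by
    ext ω
    simp only [Set.mem_setOf_eq, Set.mem_iInter, Finset.mem_Icc]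
    constructor
    · intro h p hp; exact h p hp.1 hp.2
    · intro h p h1 h2; exact h p ⟨h1, h2⟩
  rw [h]
  exact (Finset.Icc k L).measurableSet_biInter
    fun p _ => ℱ.le (c p) _ (by
      simpa using (hτ p).measurableSet_eq (c p))

lemma snellBound_integrable {T L k : ℕ} {j : ℕ → ℕ} {X : (ℕ → ℕ) → Ω → ℝ}
    (μ : Measure Ω)
    (hX : ∀ c : ℕ → ℕ, DetChain L (T + 1) c → Integrable (X c) μ) :
    Integrable (snellBound T L k j X) μ :=
  integrable_finset_sum _ fun u hu => ((hX _ (mem_chainsSet.1 hu).1).abs)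

lemma payoff_integrable_bound (T L : ℕ) (μ : Measure Ω) (ℱ : Filtration ℕ m0)
    (X : (ℕ → ℕ) → Ω → ℝ)
    (hXdep : ∀ j j' : ℕ → ℕ, (∀ p, 1 ≤ p → p ≤ L → j p = j' p) → X j = X j')
    (hX : ∀ c : ℕ → ℕ, DetChain L (T + 1) c → Integrable (X c) μ)
    {k : ℕ} (hk1 : 1 ≤ k) (hkL : k ≤ L) {j : ℕ → ℕ}
    (hj : DetChain (k - 1) (T + 1) j) {s : ℕ} (hjs : ∀ p, 1 ≤ p → p ≤ k - 1 → j p ≤ s)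
    {τ : ℕ → Ω → ℕ} (hst : ∀ p, IsStoppingTime ℱ (fun ω => ((τ p ω : ℕ) : WithTop ℕ))) (hlow : ∀ ω, s ≤ τ k ω)
    (hmon : ∀ p, k ≤ p → p < L → ∀ ω, τ p ω ≤ τ (p + 1) ω)
    (htop : ∀ ω, τ L ω ≤ T + 1) :
    Integrable (fun ω => X (fun p => if p < k then j p else τ p ω) ω) μ ∧
      ∀ ω, |X (fun p => if p < k then j p else τ p ω) ω| ≤ snellBound T L k j X ω := by
  have hdec := payoff_decomp T L X hXdep hk1 hkL hj hjs hlow hmon htop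
  constructor
  · rw [hdec]
    exact integrable_finset_sum _ fun u hu =>
      (hX _ (mem_chainsSet.1 hu).1).indicator (measurableSet_chainEvent ℱ hst _ k L)
  · intro ω
    have h := congrFun hdec ω
    rw [h]
    refine le_trans (Finset.abs_sum_le_sum_abs _ _) (Finset.sum_le_sum fun u hu => ?_)
    by_cases hmem : ω ∈ {ω' | ∀ p, k ≤ p → p ≤ L → τ p ω' = chainExt L u p}
    · rw [Set.indicator_of_mem hmem]
    · rw [Set.indicator_of_notMem hmem, abs_zero]
      exact abs_nonneg _

lemma snellFamily_directed (T L : ℕ) (μ : Measure Ω) [IsProbabilityMeasure μ]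
    (ℱ : Filtration ℕ m0) (X : (ℕ → ℕ) → Ω → ℝ)
    (hXdep : ∀ j j' : ℕ → ℕ, (∀ p, 1 ≤ p → p ≤ L → j p = j' p) → X j = X j')
    (hX : ∀ c : ℕ → ℕ, DetChain L (T + 1) c → Integrable (X c) μ)
    {k : ℕ} (hk1 : 1 ≤ k) (hkL : k ≤ L) {j : ℕ → ℕ}
    (hj : DetChain (k - 1) (T + 1) j) {s : ℕ} (hjs : ∀ p, 1 ≤ p → p ≤ k - 1 → j p ≤ s) :
    ∀ f ∈ snellFamily T L μ ℱ X k s j, ∀ g ∈ snellFamily T L μ ℱ X k s j,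
      ∃ h ∈ snellFamily T L μ ℱ X k s j, f ≤ᵐ[μ] h ∧ g ≤ᵐ[μ] h := by
  rintro f ⟨τ, hτst, hτlow, hτmon, hτtop, rfl⟩ g ⟨σ, hσst, hσlow, hσmon, hσtop, rfl⟩
  set F : Ω → ℝ := fun ω => X (fun p => if p < k then j p else τ p ω) ω with hF
  set G : Ω → ℝ := fun ω => X (fun p => if p < k then j p else σ p ω) ω with hG
  have hFint : Integrable F μ :=
    (payoff_integrable_bound T L μ ℱ X hXdep hX hk1 hkL hj hjs hτst hτlow hτmon hτtop).1
  have hGint : Integrable G μ :=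
    (payoff_integrable_bound T L μ ℱ X hXdep hX hk1 hkL hj hjs hσst hσlow hσmon hσtop).1
  set f' : Ω → ℝ := μ[F|ℱ s] with hf'
  set g' : Ω → ℝ := μ[G|ℱ s] with hg'
  set A : Set Ω := {ω | g' ω ≤ f' ω} with hA
  have hAmeas : MeasurableSet[ℱ s] A := by
    rw [hA, hf', hg']
    exact measurableSet_le stronglyMeasurable_condExp.measurable
      stronglyMeasurable_condExp.measurable
  classical
  set ρ : ℕ → Ω → ℕ := fun p ω =>
    if k ≤ p ∧ p ≤ L then (if ω ∈ A then τ p ω else σ p ω) else T + 1 with hρ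
  have hρst : ∀ p, IsStoppingTime ℱ (fun ω => ((ρ p ω : ℕ) : WithTop ℕ)) := by
    intro p
    rw [isStoppingTime_nat_iff]
    intro n
    by_cases hp : k ≤ p ∧ p ≤ L
    · have hset : {ω | ρ p ω ≤ n} =
          (A ∩ {ω | τ p ω ≤ n}) ∪ (Aᶜ ∩ {ω | σ p ω ≤ n}) := by
        ext ω
        by_cases hω : ω ∈ A <;>
          simp [ρ, hp, hω, Set.mem_setOf_eq]
      rw [hset]
      by_cases hns : s ≤ n
      · exact ((ℱ.mono hns _ hAmeas).inter ((isStoppingTime_nat_iff ℱ _).1 (hτst p) n)).union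
          (((ℱ.mono hns _ hAmeas).compl).inter ((isStoppingTime_nat_iff ℱ _).1 (hσst p) n))
      · have hemp : (A ∩ {ω | τ p ω ≤ n}) ∪ (Aᶜ ∩ {ω | σ p ω ≤ n}) = ∅ := by
          apply Set.eq_empty_iff_forall_notMem.2
          intro ω hmem
          have hlb1 := le_trans (hτlow ω) (chain_mono_aux hτmon le_rfl hp.1 hp.2 ω)
          have hlb2 := le_trans (hσlow ω) (chain_mono_aux hσmon le_rfl hp.1 hp.2 ω)
          rcases hmem with ⟨-, hω⟩ | ⟨-, hω⟩ <;>
            simp only [Set.mem_setOf_eq] at hω <;> omega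
        rw [hemp]
        exact @MeasurableSet.empty _ (ℱ n)
    · have hset : {ω | ρ p ω ≤ n} = {ω | T + 1 ≤ n} := by
        ext ω; simp [ρ, hp]
      rw [hset]
      by_cases hTn : T + 1 ≤ n <;> simp [hTn]
  refine ⟨μ[(fun ω => X (fun p => if p < k then j p else ρ p ω) ω)|ℱ s],
    ⟨ρ, hρst, ?_, ?_, ?_, rfl⟩, ?_, ?_⟩
  · intro ω
    have hp : k ≤ k ∧ k ≤ L := ⟨le_rfl, hkL⟩
    by_cases hω : ω ∈ A <;> simp only [ρ, if_pos hp, hω, if_true, if_false] <;>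
      [exact hτlow ω; exact hσlow ω]
  · intro p h1 h2 ω
    have hp : k ≤ p ∧ p ≤ L := ⟨h1, by omega⟩
    have hp' : k ≤ p + 1 ∧ p + 1 ≤ L := ⟨by omega, by omega⟩
    by_cases hω : ω ∈ A <;> simp only [ρ, if_pos hp, if_pos hp', hω, if_true, if_false] <;>
      [exact hτmon p h1 h2 ω; exact hσmon p h1 h2 ω]
  · intro ω
    have hp : k ≤ L ∧ L ≤ L := ⟨hkL, le_rfl⟩
    by_cases hω : ω ∈ A <;> simp only [ρ, if_pos hp, hω, if_true, if_false] <;>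
      [exact hτtop ω; exact hσtop ω]
  all_goals {
    have hXρ : (fun ω => X (fun p => if p < k then j p else ρ p ω) ω) =
        A.indicator F + Aᶜ.indicator G := by
      funext ω
      by_cases hω : ω ∈ A
      · have := congrFun (hXdep (fun p => if p < k then j p else ρ p ω)
          (fun p => if p < k then j p else τ p ω) (fun p h1 h2 => by
            by_cases hpk : p < k
            · simp [hpk]
            · simp only [if_neg hpk, ρ, if_pos (show k ≤ p ∧ p ≤ L from ⟨by omega, h2⟩),
                hω, if_true])) ω
        simp [this, hω, F]
      · have := congrFun (hXdep (fun p => if p < k then j p else ρ p ω)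
          (fun p => if p < k then j p else σ p ω) (fun p h1 h2 => by
            by_cases hpk : p < k
            · simp [hpk]
            · simp only [if_neg hpk, ρ, if_pos (show k ≤ p ∧ p ≤ L from ⟨by omega, h2⟩),
                hω, if_false])) ω
        simp [this, hω, G]
    have hcond : μ[(fun ω => X (fun p => if p < k then j p else ρ p ω) ω)|ℱ s]
        =ᵐ[μ] A.indicator f' + Aᶜ.indicator g' := by
      rw [hXρ]
      refine (condExp_add (hFint.indicator (ℱ.le s _ hAmeas))
        (hGint.indicator (ℱ.le s _ hAmeas.compl)) _).trans ?_
      exact (condExp_indicator hFint hAmeas).add (condExp_indicator hGint hAmeas.compl)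
    filter_upwards [hcond] with ω hω
    rw [hω]
    by_cases hmem : ω ∈ A
    · simp only [Pi.add_apply, Set.indicator_of_mem hmem,
        Set.indicator_of_notMem (by simpa using hmem : ω ∉ Aᶜ), add_zero]
      first
      | exact le_rfl
      | exact hmem
    · simp only [Pi.add_apply, Set.indicator_of_notMem hmem,
        Set.indicator_of_mem (by simpa using hmem : ω ∈ Aᶜ), zero_add]
      first
      | exact le_of_lt (lt_of_not_ge hmem)
      | exact le_rfl
  }

end SnellHelpers

/-- **Supermartingale and domination property of the parameterized Snell envelopes.**
For every `1 ≤ k ≤ L` and every chain `j 1 ≤ ... ≤ j (k-1) ≤ T+1`, the Snell envelope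
`(Y*_r^{L-k+1, j 1, ..., j (k-1)})_{r ≥ j (k-1)}` is a supermartingale, i.e.
`E[Y*_{r+1}^{L-k+1, j} | ℱ r] ≤ Y*_r^{L-k+1, j}` a.s., and it dominates the virtual
cashflow: `Y*_r^{L-k, j 1, ..., j (k-1), r} ≤ Y*_r^{L-k+1, j 1, ..., j (k-1)}` a.s. -/
theorem parameterized_snell_supermartingale_domination
    (T L : ℕ) (μ : Measure Ω) [IsProbabilityMeasure μ] (ℱ : Filtration ℕ m0)
    (X : (ℕ → ℕ) → Ω → ℝ)
    (hXdep : ∀ j j' : ℕ → ℕ, (∀ p, 1 ≤ p → p ≤ L → j p = j' p) → X j = X j')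
    (hX : ∀ j : ℕ → ℕ, DetChain L (T + 1) j →
      StronglyMeasurable[ℱ (j L)] (X j) ∧ Integrable (X j) μ)
    -- `Ystar k r j` is the Snell envelope `Y*_r^{L-k+1, j 1, ..., j (k-1)}`
    (Ystar : ℕ → ℕ → (ℕ → ℕ) → Ω → ℝ)
    (hY : ∀ k r (j : ℕ → ℕ), 1 ≤ k → k ≤ L → DetChain (k - 1) (T + 1) j →
      (∀ p, 1 ≤ p → p ≤ k - 1 → j p ≤ r) → r ≤ T + 1 →
      IsEssSupFamily μ (snellFamily T L μ ℱ X k r j) (Ystar k r j))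
    (hY0 : ∀ r (j : ℕ → ℕ), Ystar (L + 1) r j = X j)
    (k : ℕ) (hk1 : 1 ≤ k) (hkL : k ≤ L)
    (j : ℕ → ℕ) (hj : DetChain (k - 1) (T + 1) j)
    (r : ℕ) (hjr : ∀ p, 1 ≤ p → p ≤ k - 1 → j p ≤ r) :
    (r + 1 ≤ T + 1 →
      μ[Ystar k (r + 1) j|ℱ r] ≤ᵐ[μ] Ystar k r j) ∧
    (r ≤ T + 1 →
      Ystar (k + 1) r (fun p => if p = k then r else j p) ≤ᵐ[μ] Ystar k r j) := by
  constructor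
  · -- supermartingale property
    intro hr1
    have hr : r ≤ T + 1 := by omega
    have hjr1 : ∀ p, 1 ≤ p → p ≤ k - 1 → j p ≤ r + 1 := fun p h1 h2 =>
      le_trans (hjr p h1 h2) (by omega)
    have H0 := hY k r j hk1 hkL hj hjr hr
    have H1 := hY k (r + 1) j hk1 hkL hj hjr1 hr1
    set S : Set (Ω → ℝ) := snellFamily T L μ ℱ X k (r + 1) j with hSdef
    set Y1 : Ω → ℝ := Ystar k (r + 1) j with hY1def
    set Y0 : Ω → ℝ := Ystar k r j with hY0def
    set B : Ω → ℝ := snellBound T L k j X with hBdef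
    have hBint : Integrable B μ := snellBound_integrable μ (fun c hc => (hX c hc).2)
    set Gbar : Ω → ℝ := μ[B|ℱ (r + 1)] with hGbardef
    have hGbarint : Integrable Gbar μ := integrable_condExp
    -- properties of members of the family `S`
    have hmem_props : ∀ f ∈ S, Integrable f μ ∧ StronglyMeasurable[ℱ (r + 1)] f ∧
        f ≤ᵐ[μ] Gbar ∧ (∫ ω, f ω ∂μ) ≤ ∫ ω, B ω ∂μ ∧ μ[f|ℱ r] ≤ᵐ[μ] Y0 := by
      rintro f ⟨τ, hst, hlow, hmon, htop, rfl⟩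
      obtain ⟨hFint, hFbd⟩ := payoff_integrable_bound T L μ ℱ X hXdep
        (fun c hc => (hX c hc).2) hk1 hkL hj hjr1 hst hlow hmon htop
      have hFle : (fun ω => X (fun p => if p < k then j p else τ p ω) ω) ≤ᵐ[μ] B :=
        Filter.Eventually.of_forall fun ω => le_trans (le_abs_self _) (hFbd ω)
      refine ⟨integrable_condExp, stronglyMeasurable_condExp,
        condExp_mono hFint hBint hFle, ?_, ?_⟩
      · rw [integral_condExp (ℱ.le (r + 1))]
        exact integral_mono hFint hBint fun ω => le_trans (le_abs_self _) (hFbd ω)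
      · exact (condExp_condExp_of_le (ℱ.mono (Nat.le_succ r)) (ℱ.le (r + 1))).trans_le
          (H0.1 _ ⟨τ, hst, fun ω => le_trans (Nat.le_succ r) (hlow ω), hmon, htop, rfl⟩)
    -- the family is nonempty
    have hmem0 : (μ[(fun ω => X (fun p => if p < k then j p else T + 1) ω)|ℱ (r + 1)]) ∈ S :=
      ⟨fun _ _ => T + 1, fun p => isStoppingTime_const ℱ (T + 1), fun ω => hr1,
        fun _ _ _ _ => le_rfl, fun ω => le_rfl, rfl⟩
    -- sup of the integrals
    set Iset : Set ℝ := (fun f : Ω → ℝ => ∫ ω, f ω ∂μ) '' S with hIsetdef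
    have hne : Iset.Nonempty := ⟨_, ⟨_, hmem0, rfl⟩⟩
    have hbdd : BddAbove Iset := by
      refine ⟨∫ ω, B ω ∂μ, ?_⟩
      rintro x ⟨f, hf, rfl⟩
      exact (hmem_props f hf).2.2.2.1
    obtain ⟨v, hvmono, hvtend, hvmem⟩ := exists_seq_tendsto_sSup hne hbdd
    set c : ℝ := sSup Iset with hcdef
    have hvmem' : ∀ n, ∃ f, f ∈ S ∧ (∫ ω, f ω ∂μ) = v n := fun n => hvmem n
    choose f0 hf0S hf0int using hvmem'
    -- directedness of the family
    have hdir := snellFamily_directed T L μ ℱ X hXdep (fun c hc => (hX c hc).2)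
      hk1 hkL hj hjr1
    -- a monotone sequence dominating `f0`
    have hstepc : ∀ (g : {h : Ω → ℝ // h ∈ S}) (n : ℕ),
        {h : Ω → ℝ // h ∈ S ∧ g.1 ≤ᵐ[μ] h ∧ f0 n ≤ᵐ[μ] h} := by
      intro g n
      have hd := hdir g.1 g.2 (f0 n) (hf0S n)
      exact ⟨hd.choose, hd.choose_spec.1, hd.choose_spec.2.1, hd.choose_spec.2.2⟩
    set gseq : ℕ → {h : Ω → ℝ // h ∈ S} := fun n =>
      Nat.rec ⟨f0 0, hf0S 0⟩ (fun n prev => ⟨(hstepc prev (n + 1)).1,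
        (hstepc prev (n + 1)).2.1⟩) n with hgseqdef
    set gn : ℕ → Ω → ℝ := fun n => (gseq n).1 with hgndef
    have hgnS : ∀ n, gn n ∈ S := fun n => (gseq n).2
    have hgn_mono : ∀ n, gn n ≤ᵐ[μ] gn (n + 1) := fun n =>
      (hstepc (gseq n) (n + 1)).2.2.1
    have hgn_f0 : ∀ n, f0 n ≤ᵐ[μ] gn n := by
      intro n
      cases n with
      | zero => exact Filter.EventuallyLE.refl _ _
      | succ n => exact (hstepc (gseq n) (n + 1)).2.2.2
    have hgnint : ∀ n, Integrable (gn n) μ := fun n => (hmem_props _ (hgnS n)).1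
    have hgnmeas : ∀ n, Measurable (gn n) := fun n =>
      ((hmem_props _ (hgnS n)).2.1.mono (ℱ.le (r + 1))).measurable
    have hgnGbar : ∀ n, gn n ≤ᵐ[μ] Gbar := fun n => (hmem_props _ (hgnS n)).2.2.1
    have hgnY1 : ∀ n, gn n ≤ᵐ[μ] Y1 := fun n => H1.1 _ (hgnS n)
    have hintle : ∀ n, (∫ ω, gn n ω ∂μ) ≤ c := fun n => le_csSup hbdd ⟨_, hgnS n, rfl⟩
    have hvle : ∀ n, v n ≤ ∫ ω, gn n ω ∂μ := fun n =>
      (hf0int n) ▸ integral_mono_ae (hmem_props _ (hf0S n)).1 (hgnint n) (hgn_f0 n)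
    have hinttend : Filter.Tendsto (fun n => ∫ ω, gn n ω ∂μ) Filter.atTop (nhds c) :=
      tendsto_of_tendsto_of_tendsto_of_le_of_le hvtend tendsto_const_nhds hvle hintle
    -- a.e. limit of the monotone sequence
    set glim : Ω → ℝ := fun ω => Filter.limsup (fun n => gn n ω) Filter.atTop with hglimdef
    have hglim_meas : Measurable glim := Measurable.limsup hgnmeas
    have haemono : ∀ᵐ ω ∂μ, ∀ n, gn n ω ≤ gn (n + 1) ω := ae_all_iff.2 hgn_mono
    have haebdd : ∀ᵐ ω ∂μ, ∀ n, gn n ω ≤ Gbar ω := ae_all_iff.2 hgnGbar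
    have haetend : ∀ᵐ ω ∂μ, Filter.Tendsto (fun n => gn n ω) Filter.atTop (nhds (glim ω)) := by
      filter_upwards [haemono, haebdd] with ω h1 h2
      have hm : Monotone fun n => gn n ω := monotone_nat_of_le_succ h1
      have hb : BddAbove (Set.range fun n => gn n ω) := by
        refine ⟨Gbar ω, ?_⟩
        rintro x ⟨n, rfl⟩
        exact h2 n
      have ht := tendsto_atTop_ciSup hm hb
      have he : glim ω = ⨆ n, gn n ω := ht.limsup_eq
      rw [he]
      exact ht
    have haemono' : ∀ᵐ ω ∂μ, Monotone fun n => gn n ω := by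
      filter_upwards [haemono] with ω h1
      exact monotone_nat_of_le_succ h1
    have hglim_bounds : ∀ᵐ ω ∂μ, gn 0 ω ≤ glim ω ∧ glim ω ≤ Gbar ω := by
      filter_upwards [haemono', haebdd, haetend] with ω hm h2 ht
      exact ⟨ge_of_tendsto ht (Filter.Eventually.of_forall fun n => hm (Nat.zero_le n)),
        le_of_tendsto ht (Filter.Eventually.of_forall h2)⟩
    have hglim_int : Integrable glim μ := by
      refine Integrable.mono' ((hgnint 0).abs.add hGbarint.abs)
        hglim_meas.aestronglyMeasurable ?_
      filter_upwards [hglim_bounds] with ω hω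
      rw [Real.norm_eq_abs, abs_le]
      constructor
      · have h1 := neg_abs_le (gn 0 ω)
        have h2 := abs_nonneg (Gbar ω)
        have := hω.1
        simp only [Pi.add_apply]
        linarith
      · have h1 := le_abs_self (Gbar ω)
        have h2 := abs_nonneg (gn 0 ω)
        have := hω.2
        simp only [Pi.add_apply]
        linarith
    -- glim is (a version of) Y1
    have hglim_le : glim ≤ᵐ[μ] Y1 := by
      filter_upwards [haetend, ae_all_iff.2 hgnY1] with ω ht hle
      exact le_of_tendsto ht (Filter.Eventually.of_forall hle)
    have hintglim : (∫ ω, glim ω ∂μ) = c := by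
      have h2 := integral_tendsto_of_tendsto_of_monotone hgnint hglim_int haemono' haetend
      exact tendsto_nhds_unique h2 hinttend
    have hmax_int : ∀ f : Ω → ℝ, Integrable f μ →
        Integrable (fun ω => max (f ω) (glim ω)) μ := fun f hf =>
      (hf.sup hglim_int).congr (Filter.Eventually.of_forall fun ω => rfl)
    have hY1_le : Y1 ≤ᵐ[μ] glim := by
      refine H1.2 _ fun f hf => ?_
      obtain ⟨hfint, hfmeas, hfGbar, hfintle, -⟩ := hmem_props f hf
      have hMint : ∀ n, Integrable (fun ω => max (f ω) (gn n ω)) μ := fun n =>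
        (hfint.sup (hgnint n)).congr (Filter.Eventually.of_forall fun ω => rfl)
      have hMle : ∀ n, (∫ ω, max (f ω) (gn n ω) ∂μ) ≤ c := by
        intro n
        obtain ⟨h, hhS, hfh, hgh⟩ := hdir f hf (gn n) (hgnS n)
        have hle : (fun ω => max (f ω) (gn n ω)) ≤ᵐ[μ] h := by
          filter_upwards [hfh, hgh] with ω e1 e2
          exact max_le e1 e2
        exact le_trans (integral_mono_ae (hMint n) (hmem_props h hhS).1 hle)
          (le_csSup hbdd ⟨h, hhS, rfl⟩)
      have hMtend : ∀ᵐ ω ∂μ, Filter.Tendsto (fun n => max (f ω) (gn n ω))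
          Filter.atTop (nhds (max (f ω) (glim ω))) := by
        filter_upwards [haetend] with ω ht
        exact tendsto_const_nhds.max ht
      have hMmono : ∀ᵐ ω ∂μ, Monotone fun n => max (f ω) (gn n ω) := by
        filter_upwards [haemono'] with ω hm
        exact fun a b hab => max_le_max le_rfl (hm hab)
      have h2 := integral_tendsto_of_tendsto_of_monotone hMint (hmax_int f hfint)
        hMmono hMtend
      have hintmax : (∫ ω, max (f ω) (glim ω) ∂μ) ≤ c :=
        le_of_tendsto h2 (Filter.Eventually.of_forall hMle)
      have hnonneg : 0 ≤ᵐ[μ] fun ω => max (f ω) (glim ω) - glim ω :=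
        Filter.Eventually.of_forall fun ω => sub_nonneg.2 (le_max_right _ _)
      have hzero : (∫ ω, (max (f ω) (glim ω) - glim ω) ∂μ) = 0 := by
        refine le_antisymm ?_ (integral_nonneg_of_ae hnonneg)
        rw [integral_sub (hmax_int f hfint) hglim_int]
        linarith [hintmax, hintglim.ge]
      have hae0 := (integral_eq_zero_iff_of_nonneg_ae hnonneg
        ((hmax_int f hfint).sub hglim_int)).1 hzero
      filter_upwards [hae0] with ω hω
      have hω' : max (f ω) (glim ω) - glim ω = 0 := hω
      have := le_max_left (f ω) (glim ω)
      linarith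
    have hY1eq : Y1 =ᵐ[μ] glim := hY1_le.antisymm hglim_le
    have hY1int : Integrable Y1 μ := hglim_int.congr hY1eq.symm
    -- L1 convergence of the conditional expectations
    have hWnY0 : ∀ n, μ[gn n|ℱ r] ≤ᵐ[μ] Y0 := fun n => (hmem_props _ (hgnS n)).2.2.2.2
    set D : ℕ → ENNReal := fun n => ∫⁻ ω, ENNReal.ofReal |gn n ω - glim ω| ∂μ with hDdef
    have hdist : ∀ n, eLpNorm (μ[gn n|ℱ r] - μ[Y1|ℱ r]) 1 μ ≤ D n := by
      intro n
      have h1 : μ[gn n|ℱ r] - μ[Y1|ℱ r] =ᵐ[μ] μ[gn n - Y1|ℱ r] :=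
        (condExp_sub (hgnint n) hY1int _).symm
      rw [eLpNorm_congr_ae h1]
      refine le_trans (eLpNorm_one_condExp_le_eLpNorm _) ?_
      have h2 : gn n - Y1 =ᵐ[μ] gn n - glim := by
        filter_upwards [hY1eq] with ω hω
        simp [Pi.sub_apply, hω]
      rw [eLpNorm_congr_ae h2, eLpNorm_one_eq_lintegral_enorm]
      refine le_of_eq (lintegral_congr fun ω => ?_)
      rw [← ofReal_norm_eq_enorm]
      simp [Real.norm_eq_abs]
    have hDtend : Filter.Tendsto D Filter.atTop (nhds 0) := by
      have hconv := tendsto_lintegral_of_dominated_convergence (μ := μ)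
        (F := fun n ω => ENNReal.ofReal |gn n ω - glim ω|) (f := fun _ => 0)
        (bound := fun ω => ENNReal.ofReal (|gn 0 ω| + |Gbar ω| + |glim ω|))
        (fun n => ((hgnmeas n).sub hglim_meas).abs.ennreal_ofReal) ?_ ?_ ?_
      · simpa using hconv
      · intro n
        filter_upwards [haemono', haebdd] with ω hm h2
        refine ENNReal.ofReal_le_ofReal ?_
        have e1 : |gn n ω - glim ω| ≤ |gn n ω| + |glim ω| := abs_sub _ _
        have e2 : gn 0 ω ≤ gn n ω := hm (Nat.zero_le n)
        have e3 : gn n ω ≤ Gbar ω := h2 n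
        have e4 := neg_abs_le (gn 0 ω)
        have e5 := le_abs_self (Gbar ω)
        have e6 : |gn n ω| ≤ |gn 0 ω| + |Gbar ω| := by
          rw [abs_le]
          constructor <;> linarith [abs_nonneg (Gbar ω), abs_nonneg (gn 0 ω)]
        linarith
      · have hbint : Integrable (fun ω => |gn 0 ω| + |Gbar ω| + |glim ω|) μ :=
          ((hgnint 0).abs.add hGbarint.abs).add hglim_int.abs
        have hbnn : 0 ≤ᵐ[μ] fun ω => |gn 0 ω| + |Gbar ω| + |glim ω| :=
          Filter.Eventually.of_forall fun ω => by positivity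
        rw [← ofReal_integral_eq_lintegral_ofReal hbint hbnn]
        exact ENNReal.ofReal_ne_top
      · filter_upwards [haetend] with ω ht
        have h3 : Filter.Tendsto (fun n => |gn n ω - glim ω|) Filter.atTop (nhds 0) := by
          have h4 : Filter.Tendsto (fun n => gn n ω - glim ω) Filter.atTop
              (nhds (glim ω - glim ω)) := ht.sub tendsto_const_nhds
          rw [sub_self] at h4
          simpa using h4.abs
        have h5 := ENNReal.tendsto_ofReal h3
        simpa using h5
    have hWtend : Filter.Tendsto (fun n => eLpNorm (μ[gn n|ℱ r] - μ[Y1|ℱ r]) 1 μ)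
        Filter.atTop (nhds 0) :=
      tendsto_of_tendsto_of_tendsto_of_le_of_le tendsto_const_nhds hDtend
        (fun n => zero_le) hdist
    have hTIM : TendstoInMeasure μ (fun n => μ[gn n|ℱ r]) Filter.atTop (μ[Y1|ℱ r]) :=
      tendstoInMeasure_of_tendsto_eLpNorm one_ne_zero
        (fun n => (stronglyMeasurable_condExp.mono (ℱ.le r)).aestronglyMeasurable)
        (stronglyMeasurable_condExp.mono (ℱ.le r)).aestronglyMeasurable hWtend
    obtain ⟨ns, -, hns⟩ := hTIM.exists_seq_tendsto_ae
    filter_upwards [hns, ae_all_iff.2 hWnY0] with ω h1 h2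
    exact le_of_tendsto h1 (Filter.Eventually.of_forall fun i => h2 (ns i))
  · -- domination property
    intro hr
    have H0 := hY k r j hk1 hkL hj hjr hr
    rcases eq_or_lt_of_le hkL with hkeq | hklt
    · -- case k = L
      subst hkeq
      rw [hY0]
      set cc : ℕ → ℕ := fun p => if p < k then j p else r with hcc
      have hccchain : DetChain k (T + 1) cc := by
        constructor
        · intro p h1 h2
          have e1 : cc p = j p := if_pos h2
          rw [e1]
          by_cases hpk : p + 1 < k
          · rw [show cc (p + 1) = j (p + 1) from if_pos hpk]
            exact hj.1 p h1 (by omega)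
          · rw [show cc (p + 1) = r from if_neg hpk]
            exact hjr p h1 (by omega)
        · intro p h1 h2
          by_cases hpk : p < k
          · rw [show cc p = j p from if_pos hpk]
            exact hj.2 p h1 (by omega)
          · rw [show cc p = r from if_neg hpk]
            exact hr
      have hccL : cc k = r := if_neg (lt_irrefl k)
      have hccmeas : StronglyMeasurable[ℱ r] (X cc) := by
        have h := (hX cc hccchain).1
        rwa [hccL] at h
      have hccint : Integrable (X cc) μ := (hX cc hccchain).2
      have hXeq : X (fun p => if p = k then r else j p) = X cc := by
        apply hXdep
        intro p h1 h2
        by_cases hpk : p < k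
        · rw [if_neg (by omega : ¬ p = k), show cc p = j p from if_pos hpk]
        · have hpk2 : p = k := by omega
          rw [if_pos hpk2, show cc p = r from if_neg (by omega : ¬ p < k)]
      have hmem : μ[X cc|ℱ r] ∈ snellFamily T k μ ℱ X k r j :=
        ⟨fun _ _ => r, fun p => isStoppingTime_const ℱ r, fun ω => le_rfl,
          fun p _ _ ω => le_rfl, fun ω => hr, rfl⟩
      rw [hXeq, ← condExp_of_stronglyMeasurable (ℱ.le r) hccmeas hccint]
      exact H0.1 _ hmem
    · -- case k < L
      have hchain' : DetChain (k + 1 - 1) (T + 1) (fun p => if p = k then r else j p) := by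
        constructor
        · intro p h1 h2
          dsimp only
          have h2' : p < k := by omega
          rw [if_neg (by omega : ¬ p = k)]
          by_cases hpk : p + 1 = k
          · rw [if_pos hpk]
            exact hjr p h1 (by omega)
          · rw [if_neg hpk]
            exact hj.1 p h1 (by omega)
        · intro p h1 h2
          dsimp only
          by_cases hpk : p = k
          · rw [if_pos hpk]; exact hr
          · rw [if_neg hpk]; exact hj.2 p h1 (by omega)
      have hjr' : ∀ p, 1 ≤ p → p ≤ k + 1 - 1 → (if p = k then r else j p) ≤ r := by
        intro p h1 h2
        by_cases hpk : p = k
        · rw [if_pos hpk]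
        · rw [if_neg hpk]; exact hjr p h1 (by omega)
      have H1 := hY (k + 1) r _ (by omega) (by omega) hchain' hjr' hr
      refine H1.2 _ (fun f hf => ?_)
      rcases hf with ⟨τ, hst, hlow, hmon, htop, rfl⟩
      classical
      have key : (fun ω => X (fun p => if p < k + 1 then (if p = k then r else j p) else τ p ω) ω)
          = fun ω => X (fun p => if p < k then j p else
              (if p = k then r else τ p ω)) ω := by
        funext ω
        congr 1
        funext p
        rcases lt_trichotomy p k with h | h | h
        · rw [if_pos (by omega : p < k + 1), if_neg (by omega : ¬ p = k), if_pos h]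
        · rw [if_pos (by omega : p < k + 1), if_pos h, if_neg (by omega : ¬ p < k), if_pos h]
        · rw [if_neg (by omega : ¬ p < k + 1), if_neg (by omega : ¬ p < k),
            if_neg (by omega : ¬ p = k)]
      rw [key]
      refine H0.1 _ ⟨fun p ω => if p = k then r else τ p ω, ?_, ?_, ?_, ?_, rfl⟩
      · intro q
        dsimp only
        by_cases hpk : q = k
        · have h : (fun ω : Ω => ((if q = k then r else τ q ω : ℕ) : WithTop ℕ)) =
              fun _ => ((r : ℕ) : WithTop ℕ) := by
            funext ω; rw [if_pos hpk]
          rw [h]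
          exact isStoppingTime_const ℱ r
        · have h : (fun ω : Ω => ((if q = k then r else τ q ω : ℕ) : WithTop ℕ)) =
              fun ω => ((τ q ω : ℕ) : WithTop ℕ) := by
            funext ω; rw [if_neg hpk]
          rw [h]
          exact hst q
      · intro ω; dsimp only; rw [if_pos rfl]
      · intro q h1 h2 ω
        dsimp only
        by_cases hpk : q = k
        · subst hpk
          rw [if_pos rfl, if_neg (by omega : ¬ q + 1 = q)]
          exact hlow ω
        · rw [if_neg hpk, if_neg (by omega : ¬ q + 1 = k)]
          exact hmon q (by omega) h2 ω
      · intro ω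
        dsimp only
        rw [if_neg (by omega : ¬ L = k)]
        exact htop ω
end
end
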